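/- arXiv:2501.00285 — 9 statements merged into one kernel-verified Lean document; each statement's English description precedes it below -/
import Mathlib

section
/- For every positive integer n, the injective partial Catalan monoid IC_n is J-trivial, and its subsemigroup Q'_n = {α ∈ IC_n : 1 ∉ dom α} is J-trivial; that is, in each of these semigroups, any two elements generating the same two-sided principal ideal are equal. -/
open scoped Classical

namespace ICCatalan

/-- Partial injective transformations on `Fin n` (representing the chain `[n] = {1,…,n}`). -/
abbrev PT (n : ℕ) := Fin n ≃. Fin n

/-- Composition (left-to-right, `x(αβ) = (xα)β`) makes `PT n` a monoid. -/
noncomputable instance instMonoidPT (n : ℕ) : Monoid (PT n) where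
  mul f g := f.trans g
  one := PEquiv.refl (Fin n)
  mul_assoc := PEquiv.trans_assoc
  one_mul := PEquiv.refl_trans
  mul_one := PEquiv.trans_refl

lemma mul_def {n : ℕ} (f g : PT n) : f * g = f.trans g := rfl

/-- The domain of a partial transformation. -/
def pdom {n : ℕ} (f : PT n) : Set (Fin n) := {x | ∃ y, f x = some y}

/-- The image of a partial transformation. -/
def pim {n : ℕ} (f : PT n) : Set (Fin n) := {y | ∃ x, f x = some y}

/-- The height `|im f|` of a partial transformation. -/
noncomputable def height {n : ℕ} (f : PT n) : ℕ := (pim f).ncard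

/-- `f` is order-decreasing: `xf ≤ x` on the domain. -/
def IsDecr {n : ℕ} (f : PT n) : Prop := ∀ x y : Fin n, f x = some y → y ≤ x

/-- `f` is isotone: `x ≤ y` implies `xf ≤ yf` on the domain. -/
def IsIso {n : ℕ} (f : PT n) : Prop :=
  ∀ x₁ x₂ y₁ y₂ : Fin n, f x₁ = some y₁ → f x₂ = some y₂ → x₁ ≤ x₂ → y₁ ≤ y₂

/-- The injective partial Catalan monoid `IC_n`: all isotone order-decreasing
partial injective transformations of `[n]`. -/
def IC (n : ℕ) : Set (PT n) := {f | IsIso f ∧ IsDecr f}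

/-- `Q'_n = {α ∈ IC_n : 1 ∉ dom α}` (the least element of `Fin n` plays the role of `1 ∈ [n]`). -/
def Qp (n : ℕ) : Set (PT n) := {f | f ∈ IC n ∧ ∀ x : Fin n, (x : ℕ) = 0 → f x = none}

/-- `S¹ : S` with an identity adjoined (realized inside `PT n`). -/
def SOne {n : ℕ} (S : Set (PT n)) : Set (PT n) := S ∪ {1}

/-- The starred Green relation `L*` of the subsemigroup `S`. -/
def LStar {n : ℕ} (S : Set (PT n)) (a b : PT n) : Prop :=
  ∀ x ∈ SOne S, ∀ y ∈ SOne S, (a * x = a * y ↔ b * x = b * y)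

/-- The starred Green relation `R*` of the subsemigroup `S`. -/
def RStar {n : ℕ} (S : Set (PT n)) (a b : PT n) : Prop :=
  ∀ x ∈ SOne S, ∀ y ∈ SOne S, (x * a = y * a ↔ x * b = y * b)

/-- The starred Green relation `H* = L* ∩ R*`. -/
def HStar {n : ℕ} (S : Set (PT n)) (a b : PT n) : Prop :=
  LStar S a b ∧ RStar S a b

/-- The partial identity on a subset `A` of `[n]`. -/
noncomputable def pid {n : ℕ} (A : Set (Fin n)) : PT n := PEquiv.ofSet A

/-- An essential element: exactly one point `y` of the domain is moved, and `yf = y - 1`. -/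
def IsEssential {n : ℕ} (f : PT n) : Prop :=
  ∃ y z : Fin n, f y = some z ∧ (z : ℕ) + 1 = (y : ℕ) ∧
    ∀ x w : Fin n, f x = some w → w ≠ x → x = y

/-- The shift of `f`: the number of non-fixed points of its domain. -/
noncomputable def shift {n : ℕ} (f : PT n) : ℕ := {x : Fin n | ∃ w, f x = some w ∧ w ≠ x}.ncard


/-- `a` lies below `b` in the `J`-preorder of the semigroup `S`:
`a ∈ {b} ∪ Sb ∪ bS ∪ SbS`. -/
def JBelow {n : ℕ} (S : Set (PT n)) (a b : PT n) : Prop :=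
  a = b ∨ (∃ x ∈ S, a = x * b) ∨ (∃ x ∈ S, a = b * x) ∨ (∃ x ∈ S, ∃ y ∈ S, a = x * b * y)

/-!
If `a = U b V` and `b = U' a V'` with all four factors order-decreasing, then
`a = (U U') a (V' V)`, so the domain of `a` is invariant under the decreasing partial injection
`U U'`. Such a map must fix every point of an invariant set (a least moved point would share its
image with that image), hence `U` fixes `dom a` and `xa = (xb)V ≤ xb` for `x ∈ dom a`. By symmetry
`a` and `b` have the same domain and dominate each other pointwise, so `a = b`.
-/

end ICCatalan

namespace PEquiv

variable {α : Type*}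

theorem apply_eq_some_self_of_invariant [PartialOrder α] [WellFoundedLT α] {P : α ≃. α}
    (hP : ∀ x y, P x = some y → y ≤ x) {D : Set α} (hD : ∀ x ∈ D, ∃ y ∈ D, P x = some y) :
    ∀ x ∈ D, P x = some x := by
  intro x
  induction x using WellFoundedLT.induction with
  | ind x ih =>
    intro hx
    obtain ⟨y, hyD, hy⟩ := hD x hx
    rcases (hP x y hy).lt_or_eq with hlt | rfl
    · exact absurd (P.inj (ih y hlt hyD) hy) hlt.ne
    · exact hy

theorem eq_of_forall_apply_le [PartialOrder α] {a b : α ≃. α}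
    (hab : ∀ x y, a x = some y → ∃ z, b x = some z ∧ y ≤ z)
    (hba : ∀ x y, b x = some y → ∃ z, a x = some z ∧ y ≤ z) : a = b := by
  ext1 x
  cases ha : a x with
  | some y =>
    obtain ⟨z, hbz, hyz⟩ := hab x y ha
    obtain ⟨y', hay', hzy'⟩ := hba x z hbz
    rw [ha, Option.some_inj] at hay'
    rw [hbz, le_antisymm hyz (hay' ▸ hzy')]
  | none =>
    cases hb : b x with
    | none => rfl
    | some z =>
      obtain ⟨y, hay, -⟩ := hba x z hb
      rw [ha] at hay
      cases hay

end PEquiv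

namespace ICCatalan

section Decreasing

variable {n : ℕ}

lemma mul_apply_eq_some {f g : PT n} {x z : Fin n} :
    (f * g) x = some z ↔ ∃ y, f x = some y ∧ g y = some z :=
  PEquiv.trans_eq_some f g x z

lemma isDecr_one : IsDecr (1 : PT n) := by
  intro x y h
  rw [Option.some_inj.mp h]

lemma IsDecr.mul {f g : PT n} (hf : IsDecr f) (hg : IsDecr g) : IsDecr (f * g) := by
  intro x z h
  obtain ⟨y, hy, hz⟩ := mul_apply_eq_some.mp h
  exact (hg y z hz).trans (hf x y hy)

lemma JBelow.exists_eq_mul_mul {S : Set (PT n)} (hS : ∀ f ∈ S, IsDecr f) {a b : PT n}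
    (h : JBelow S a b) : ∃ U V : PT n, IsDecr U ∧ IsDecr V ∧ a = U * b * V := by
  rcases h with rfl | ⟨x, hx, rfl⟩ | ⟨x, hx, rfl⟩ | ⟨x, hx, y, hy, rfl⟩
  · exact ⟨1, 1, isDecr_one, isDecr_one, by rw [one_mul, mul_one]⟩
  · exact ⟨x, 1, hS x hx, isDecr_one, (mul_one _).symm⟩
  · exact ⟨1, x, isDecr_one, hS x hx, by rw [one_mul]⟩
  · exact ⟨x, y, hS x hx, hS y hy, rfl⟩

lemma apply_eq_some_self_of_eq_mul_mul {U U' a b V V' : PT n} (hU : IsDecr U) (hU' : IsDecr U')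
    (ha : a = U * b * V) (hb : b = U' * a * V') {x y : Fin n} (hx : a x = some y) :
    U x = some x := by
  have hloop : a = U * U' * a * (V' * V) := by
    calc a = U * (U' * a * V') * V := by rw [← hb, ha]
      _ = U * U' * a * (V' * V) := by simp only [mul_assoc]
  have hinv : ∀ p ∈ pdom a, ∃ q ∈ pdom a, (U * U') p = some q := by
    rintro p ⟨r, hr⟩
    rw [hloop] at hr
    obtain ⟨w, hw, -⟩ := mul_apply_eq_some.mp hr
    obtain ⟨q, hq, hqw⟩ := mul_apply_eq_some.mp hw
    exact ⟨q, ⟨w, hqw⟩, hq⟩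
  obtain ⟨u, hu, hux⟩ := mul_apply_eq_some.mp
    (PEquiv.apply_eq_some_self_of_invariant (hU.mul hU') hinv x ⟨y, hx⟩)
  rwa [le_antisymm (hU x u hu) (hU' u x hux)] at hu

lemma exists_apply_ge_of_eq_mul_mul {U U' a b V V' : PT n} (hU : IsDecr U) (hU' : IsDecr U')
    (hV : IsDecr V) (ha : a = U * b * V) (hb : b = U' * a * V') :
    ∀ x y, a x = some y → ∃ z, b x = some z ∧ y ≤ z := by
  intro x y hxy
  have hUx := apply_eq_some_self_of_eq_mul_mul hU hU' ha hb hxy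
  rw [ha] at hxy
  obtain ⟨z, hz, hzy⟩ := mul_apply_eq_some.mp hxy
  obtain ⟨x', hx', hz⟩ := mul_apply_eq_some.mp hz
  rw [hUx, Option.some_inj] at hx'
  exact ⟨z, hx' ▸ hz, hV z y hzy⟩

lemma eq_of_jBelow_of_jBelow {S : Set (PT n)} (hS : ∀ f ∈ S, IsDecr f) {a b : PT n}
    (hab : JBelow S a b) (hba : JBelow S b a) : a = b := by
  obtain ⟨U, V, hU, hV, ha⟩ := hab.exists_eq_mul_mul hS
  obtain ⟨U', V', hU', hV', hb⟩ := hba.exists_eq_mul_mul hS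
  exact PEquiv.eq_of_forall_apply_le (exists_apply_ge_of_eq_mul_mul hU hU' hV ha hb)
    (exists_apply_ge_of_eq_mul_mul hU' hU hV' hb ha)

end Decreasing

theorem stmt0_general (n : ℕ) :
    (∀ a ∈ IC n, ∀ b ∈ IC n,
        JBelow (IC n) a b → JBelow (IC n) b a → a = b) ∧
    (∀ a ∈ Qp n, ∀ b ∈ Qp n,
        JBelow (Qp n) a b → JBelow (Qp n) b a → a = b) :=
  ⟨fun _ _ _ _ => eq_of_jBelow_of_jBelow fun _ hf => hf.2,
    fun _ _ _ _ => eq_of_jBelow_of_jBelow fun _ hf => hf.1.2⟩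

/-- for every positive integer `n`, both `IC_n` and `Q'_n` are `J`-trivial. -/
theorem stmt0 (n : ℕ) (hn : 0 < n) :
    (∀ a ∈ IC n, ∀ b ∈ IC n,
        JBelow (IC n) a b → JBelow (IC n) b a → a = b) ∧
    (∀ a ∈ Qp n, ∀ b ∈ Qp n,
        JBelow (Qp n) a b → JBelow (Qp n) b a → a = b) :=
  stmt0_general n

end ICCatalan
end

section
/- Let S be either IC_n or Q'_n. An element α ∈ S is regular in S (i.e., there exists β ∈ S with αβα = α) if and only if α is an idempotent (α² = α). Consequently, for n ≥ 2 neither IC_n nor Q'_n is a regular semigroup. -/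
open scoped Classical

namespace PEquiv

variable {X : Type*} [PartialOrder X] {f g : X ≃. X}

/-- `y = x(fgf) = (yg)f`, so `yg ≤ y = (yg)f ≤ yg` since `g` and `f` are decreasing. -/
theorem apply_eq_self_of_trans_trans_eq (hf : ∀ x y, f x = some y → y ≤ x)
    (hg : ∀ x y, g x = some y → y ≤ x) (h : (f.trans g).trans f = f) {x y : X}
    (hxy : f x = some y) : f y = some y := by
  have hy : ((f x).bind g).bind f = some y := by
    rw [← hxy]
    exact congrArg (· x) h
  rw [hxy, Option.bind_some, Option.bind_eq_some_iff] at hy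
  obtain ⟨z, hyz, hzy⟩ := hy
  rwa [le_antisymm (hg y z hyz) (hf z y hzy)] at hzy

theorem trans_self_eq_of_trans_trans_eq (hf : ∀ x y, f x = some y → y ≤ x)
    (hg : ∀ x y, g x = some y → y ≤ x) (h : (f.trans g).trans f = f) : f.trans f = f := by
  ext1 x
  change (f x).bind f = f x
  cases hx : f x with
  | none => rfl
  | some y => exact apply_eq_self_of_trans_trans_eq hf hg h hx

end PEquiv

namespace ICCatalan

theorem mul_self_eq_of_mul_mul_eq {n : ℕ} {α β : PT n} (hα : IsDecr α) (hβ : IsDecr β)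
    (h : α * β * α = α) : α * α = α :=
  PEquiv.trans_self_eq_of_trans_trans_eq hα hβ h

theorem single_mem_IC {n : ℕ} {a b : Fin n} (hba : b ≤ a) : PEquiv.single a b ∈ IC n := by
  refine ⟨fun x₁ x₂ y₁ y₂ h₁ h₂ _ => ?_, fun x y h => ?_⟩
  · obtain ⟨-, rfl⟩ := (PEquiv.mem_single_iff _ _ _ _).1 h₁
    obtain ⟨-, rfl⟩ := (PEquiv.mem_single_iff _ _ _ _).1 h₂
    exact le_rfl
  · obtain ⟨rfl, rfl⟩ := (PEquiv.mem_single_iff _ _ _ _).1 h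
    exact hba

theorem single_mem_Qp {n : ℕ} {a b : Fin n} (hba : b ≤ a) (ha : (a : ℕ) ≠ 0) :
    PEquiv.single a b ∈ Qp n := by
  refine ⟨single_mem_IC hba, fun x hx => PEquiv.single_apply_of_ne ?_ b⟩
  rintro rfl
  exact ha hx

theorem single_mul_single_ne {n : ℕ} {a b : Fin n} (hab : a ≠ b) :
    PEquiv.single a b * PEquiv.single a b ≠ PEquiv.single a b := by
  intro h
  have h' : (⊥ : PT n) = PEquiv.single a b :=
    (PEquiv.single_trans_single_of_ne hab.symm a b).symm.trans h
  simpa using congrArg (· a) h'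

theorem stmt1_general (n : ℕ) :
    (∀ S ∈ ({IC n, Qp n} : Set (Set (PT n))), ∀ α ∈ S,
        ((∃ β ∈ S, α * β * α = α) ↔ α * α = α)) ∧
    (2 ≤ n →
      ¬ (∀ α ∈ IC n, ∃ β ∈ IC n, α * β * α = α) ∧
      ¬ (∀ α ∈ Qp n, ∃ β ∈ Qp n, α * β * α = α)) := by
  have isDecr_of_mem : ∀ S ∈ ({IC n, Qp n} : Set (Set (PT n))), ∀ α ∈ S, IsDecr α := by
    rintro S (rfl | rfl) α hα
    exacts [hα.2, hα.1.2]
  have regular_iff : ∀ S ∈ ({IC n, Qp n} : Set (Set (PT n))), ∀ α ∈ S,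
      ((∃ β ∈ S, α * β * α = α) ↔ α * α = α) := by
    refine fun S hS α hα => ⟨fun ⟨β, hβ, h⟩ => ?_, fun h => ⟨α, hα, by rw [mul_assoc, h, h]⟩⟩
    exact mul_self_eq_of_mul_mul_eq (isDecr_of_mem S hS α hα) (isDecr_of_mem S hS β hβ) h
  refine ⟨regular_iff, fun hn => ?_⟩
  -- the partial map `2 ↦ 1` of `[n]`
  set α : PT n := PEquiv.single ⟨1, hn⟩ ⟨0, by omega⟩
  have hαQ : α ∈ Qp n := single_mem_Qp (Fin.mk_le_mk.2 zero_le_one) one_ne_zero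
  have hα : α * α ≠ α := single_mul_single_ne (Fin.ne_of_val_ne one_ne_zero)
  exact ⟨fun h => hα ((regular_iff _ (by simp) α hαQ.1).1 (h α hαQ.1)),
    fun h => hα ((regular_iff _ (by simp) α hαQ).1 (h α hαQ))⟩

/-- in `S ∈ {IC_n, Q'_n}`, an element is regular iff it is idempotent;
consequently, for `n ≥ 2`, neither `IC_n` nor `Q'_n` is a regular semigroup. -/
theorem stmt1 (n : ℕ) (hn : 0 < n) :
    (∀ S ∈ ({IC n, Qp n} : Set (Set (PT n))), ∀ α ∈ S,
        ((∃ β ∈ S, α * β * α = α) ↔ α * α = α)) ∧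
    (2 ≤ n →
      ¬ (∀ α ∈ IC n, ∃ β ∈ IC n, α * β * α = α) ∧
      ¬ (∀ α ∈ Qp n, ∃ β ∈ Qp n, α * β * α = α)) :=
  stmt1_general n

end ICCatalan
end

section
/- The injective partial Catalan monoid IC_n is abundant: every L*-class of IC_n contains an idempotent and every R*-class of IC_n contains an idempotent. -/
open scoped Classical

namespace ICCatalan

/-!
`IC n` lies in the symmetric inverse monoid, where `a * a⁻¹` and `a⁻¹ * a` are the partial
identities on `dom a` and `im a`; partial identities are isotone and order-decreasing, so both lie
in `IC n`. In any monoid, `a * e = a` together with `e = b * a` gives `a * x = a * y ↔ e * x = e * y`,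
so `a` is `L*`-related to `a⁻¹ * a` (and dually `R*`-related to `a * a⁻¹`) in every subsemigroup.
-/

theorem PEquiv.self_trans_symm_trans {α β : Type*} (f : α ≃. β) : (f.trans f.symm).trans f = f := by
  ext x b
  simp only [PEquiv.trans_eq_some, PEquiv.eq_some_iff]
  constructor
  · rintro ⟨a, ⟨c, hxc, hac⟩, hab⟩
    rwa [PEquiv.inj f hac hxc] at hab
  · exact fun hxb => ⟨x, ⟨b, hxb, hxb⟩, hxb⟩

section StarRelations

variable {M : Type*} [Monoid M] {a b e : M}

theorem mul_left_eq_iff_of_mul_eq (hae : a * e = a) (hba : b * a = e) (x y : M) :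
    a * x = a * y ↔ e * x = e * y := by
  constructor
  · intro h
    rw [← hba, mul_assoc, h, ← mul_assoc]
  · intro h
    rw [← hae, mul_assoc, h, ← mul_assoc]

theorem mul_right_eq_iff_of_mul_eq (hea : e * a = a) (hab : a * b = e) (x y : M) :
    x * a = y * a ↔ x * e = y * e := by
  constructor
  · intro h
    rw [← hab, ← mul_assoc, h, mul_assoc]
  · intro h
    rw [← hea, ← mul_assoc, h, mul_assoc]

end StarRelations

section PartialIdentities

variable {n : ℕ}

theorem mul_symm_mul_self (a : PT n) : a * a.symm * a = a :=
  PEquiv.self_trans_symm_trans a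

theorem mul_symm_mul_self_mul_symm (a : PT n) : a.symm * a * a.symm = a.symm := by
  simpa only [PEquiv.symm_symm] using mul_symm_mul_self a.symm

theorem ofSet_mem_IC (s : Set (Fin n)) [DecidablePred (· ∈ s)] : PEquiv.ofSet s ∈ IC n := by
  refine ⟨fun x₁ x₂ y₁ y₂ h₁ h₂ hle => ?_, fun x y h => ?_⟩
  · rw [PEquiv.ofSet_eq_some_iff] at h₁ h₂
    rwa [h₁.1, h₂.1]
  · rw [PEquiv.ofSet_eq_some_iff] at h
    exact h.1.le

theorem mul_symm_mem_IC (a : PT n) : a * a.symm ∈ IC n := by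
  rw [mul_def, PEquiv.self_trans_symm]
  exact ofSet_mem_IC _

theorem symm_mul_mem_IC (a : PT n) : a.symm * a ∈ IC n := by
  rw [mul_def, PEquiv.symm_trans_self]
  exact ofSet_mem_IC _

theorem lStar_symm_mul (S : Set (PT n)) (a : PT n) : LStar S a (a.symm * a) :=
  fun x _ y _ => mul_left_eq_iff_of_mul_eq (by rw [← mul_assoc, mul_symm_mul_self]) rfl x y

theorem rStar_mul_symm (S : Set (PT n)) (a : PT n) : RStar S a (a * a.symm) :=
  fun x _ y _ => mul_right_eq_iff_of_mul_eq (mul_symm_mul_self a) rfl x y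

end PartialIdentities

theorem stmt2_general (n : ℕ) :
    ∀ a ∈ IC n,
      (∃ e ∈ IC n, e * e = e ∧ LStar (IC n) a e) ∧
      (∃ e ∈ IC n, e * e = e ∧ RStar (IC n) a e) := by
  intro a _
  refine ⟨⟨a.symm * a, symm_mul_mem_IC a, ?_, lStar_symm_mul _ a⟩,
    ⟨a * a.symm, mul_symm_mem_IC a, ?_, rStar_mul_symm _ a⟩⟩
  · rw [← mul_assoc, mul_symm_mul_self_mul_symm]
  · rw [← mul_assoc, mul_symm_mul_self]

/-- `IC_n` is abundant: every `L*`-class and every `R*`-class of `IC_n`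
contains an idempotent. -/
theorem stmt2 (n : ℕ) (hn : 0 < n) :
    ∀ a ∈ IC n,
      (∃ e ∈ IC n, e * e = e ∧ LStar (IC n) a e) ∧
      (∃ e ∈ IC n, e * e = e ∧ RStar (IC n) a e) :=
  stmt2_general n

end ICCatalan
end

section
/- For every positive integer n, the semigroup Q'_n is right abundant (every R*-class of Q'_n contains an idempotent), but for n ≥ 2 it is not left abundant (some L*-class of Q'_n contains no idempotent). -/
/-!
For a partial injection `a`, the partial identity `a a⁻¹` on `dom a` is idempotent, and
`x a = y a ↔ x (a a⁻¹) = y (a a⁻¹)` since `a a⁻¹ a = a`; it lies in `Q'_n` with `a`, so `Q'_n`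
is right abundant. On the other side, an idempotent `e ∈ Q'_n` with `a L* e` satisfies `a e = a`
(apply `L*` to `e e = e 1`), which fails for `a = (2 ↦ 1)` because `1 ∉ dom e`.
-/

open scoped Classical

namespace PEquiv

variable {α β γ : Type*}

theorem self_trans_symm_trans (f : α ≃. β) : (f.trans f.symm).trans f = f := by
  refine PEquiv.ext fun x => ?_
  change ((f x).bind f.symm).bind f = f x
  cases h : f x with
  | none => rfl
  | some b => rw [Option.bind_some, (eq_some_iff f).mpr h, Option.bind_some, h]

theorem self_trans_symm_idempotent (f : α ≃. β) :
    (f.trans f.symm).trans (f.trans f.symm) = f.trans f.symm := by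
  rw [← trans_assoc, self_trans_symm_trans]

theorem trans_eq_trans_iff_trans_self_trans_symm (f : β ≃. γ) {x y : α ≃. β} :
    x.trans f = y.trans f ↔ x.trans (f.trans f.symm) = y.trans (f.trans f.symm) := by
  constructor
  · intro h
    simpa only [trans_assoc] using congrArg (·.trans f.symm) h
  · intro h
    calc x.trans f = (x.trans (f.trans f.symm)).trans f := by
          rw [trans_assoc, self_trans_symm_trans]
      _ = (y.trans (f.trans f.symm)).trans f := by rw [h]
      _ = y.trans f := by rw [trans_assoc, self_trans_symm_trans]

end PEquiv

namespace ICCatalan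

variable {n : ℕ}

theorem ofSet_mem_Qp {s : Set (Fin n)} [DecidablePred (· ∈ s)]
    (hs : ∀ x : Fin n, (x : ℕ) = 0 → x ∉ s) : PEquiv.ofSet s ∈ Qp n := by
  refine ⟨⟨?_, ?_⟩, fun x hx => ?_⟩
  · intro x₁ x₂ y₁ y₂ h₁ h₂ hle
    rw [PEquiv.ofSet_eq_some_iff] at h₁ h₂
    rwa [h₁.1, h₂.1]
  · intro x y h
    rw [(PEquiv.ofSet_eq_some_iff.mp h).1]
  · simp only [PEquiv.ofSet, PEquiv.coe_mk, hs x hx, if_false]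

theorem mul_symm_mem_Qp {a : PT n} (ha : a ∈ Qp n) : a * a.symm ∈ Qp n := by
  rw [mul_def, PEquiv.self_trans_symm]
  exact ofSet_mem_Qp fun x hx => by simp [ha.2 x hx]

theorem exists_idempotent_rStar {a : PT n} (ha : a ∈ Qp n) :
    ∃ e ∈ Qp n, e * e = e ∧ RStar (Qp n) a e :=
  ⟨a * a.symm, mul_symm_mem_Qp ha, PEquiv.self_trans_symm_idempotent a, rStar_mul_symm _ a⟩

theorem LStar.mul_eq_self {S : Set (PT n)} {a e : PT n} (h : LStar S a e) (he : e ∈ S)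
    (hee : e * e = e) : a * e = a := by
  have := (h 1 (Or.inr rfl) e (Or.inl he)).mpr (by rw [mul_one, hee])
  rw [← this, mul_one]

theorem mul_ne_self_of_mem_Qp {a e : PT n} (he : e ∈ Qp n) {x y : Fin n} (hxy : a x = some y)
    (hy : (y : ℕ) = 0) : a * e ≠ a := by
  intro h
  have hx : (a * e) x = e y := by
    change (a x).bind e = e y
    rw [hxy, Option.bind_some]
  rw [he.2 y hy, h, hxy] at hx
  exact Option.some_ne_none y hx

theorem single_one_zero_mem_Qp (hn : 1 < n) :
    PEquiv.single (⟨1, hn⟩ : Fin n) (⟨0, by omega⟩ : Fin n) ∈ Qp n := by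
  refine ⟨⟨?_, ?_⟩, fun x hx => PEquiv.single_apply_of_ne ?_ _⟩
  · intro x₁ x₂ y₁ y₂ h₁ h₂ _
    rw [((PEquiv.mem_single_iff _ _ _ _).mp h₁).2, ((PEquiv.mem_single_iff _ _ _ _).mp h₂).2]
  · intro x y h
    rw [((PEquiv.mem_single_iff _ _ _ _).mp h).2]
    exact Fin.mk_le_mk.mpr (Nat.zero_le _)
  · rintro rfl
    simp at hx

theorem exists_not_lStar_idempotent (hn : 2 ≤ n) :
    ∃ a ∈ Qp n, ∀ e ∈ Qp n, e * e = e → ¬ LStar (Qp n) a e :=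
  ⟨_, single_one_zero_mem_Qp hn, fun _ he hee hL =>
    mul_ne_self_of_mem_Qp he (PEquiv.single_apply _ _) rfl (hL.mul_eq_self he hee)⟩

theorem stmt3_general (n : ℕ) :
    (∀ a ∈ Qp n, ∃ e ∈ Qp n, e * e = e ∧ RStar (Qp n) a e) ∧
    (2 ≤ n → ∃ a ∈ Qp n, ∀ e ∈ Qp n, e * e = e → ¬ LStar (Qp n) a e) :=
  ⟨fun _ => exists_idempotent_rStar, exists_not_lStar_idempotent⟩

/-- `Q'_n` is right abundant for every positive `n`, but for `n ≥ 2`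
it is not left abundant. -/
theorem stmt3 (n : ℕ) (hn : 0 < n) :
    (∀ a ∈ Qp n, ∃ e ∈ Qp n, e * e = e ∧ RStar (Qp n) a e) ∧
    (2 ≤ n → ∃ a ∈ Qp n, ∀ e ∈ Qp n, e * e = e → ¬ LStar (Qp n) a e) :=
  stmt3_general n

end ICCatalan
end

section
/- For α, β ∈ IC_n: (i) α L* β (in IC_n) if and only if im α = im β; (ii) α R* β if and only if dom α = dom β; (iii) α H* β if and only if α = β. -/
open scoped Classical

namespace ICCatalan

/-! Partial identities `pid A` lie in `IC_n`, and `α * pid A = α` iff `im α ⊆ A`, while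
`pid A * α = α` iff `dom α ⊆ A`; testing `L*` and `R*` on the pair `pid A, 1` therefore recovers
image and domain. Conversely `α x = α y` iff `x, y` agree on `im α`, and, multiplying on the right
by `α⁻¹`, `x α = y α` iff `x * pid (dom α) = y * pid (dom α)`. Finally an isotone partial injection
is the unique strictly monotone map from its domain onto its image, hence determined by the two. -/

section PartialIdentity

variable {n : ℕ}

lemma pid_apply_eq_some {A : Set (Fin n)} {x y : Fin n} : pid A x = some y ↔ y = x ∧ x ∈ A := by
  rw [pid, PEquiv.ofSet_eq_some_iff, and_congr_right_iff]
  rintro rfl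
  rfl

lemma pid_apply_eq_none {A : Set (Fin n)} {x : Fin n} : pid A x = none ↔ x ∉ A := by
  simp [pid, PEquiv.ofSet]

lemma apply_eq_none_iff {f : PT n} {x : Fin n} : f x = none ↔ x ∉ pdom f := by
  cases h : f x <;> simp [pdom, h]

lemma pid_mem_IC (A : Set (Fin n)) : pid A ∈ IC n := by
  refine ⟨fun x₁ x₂ y₁ y₂ h₁ h₂ hle => ?_, fun x y h => ?_⟩
  · rw [pid_apply_eq_some] at h₁ h₂
    rwa [h₁.1, h₂.1]
  · exact (pid_apply_eq_some.1 h).1.le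

lemma mul_apply (f g : PT n) (x : Fin n) : (f * g) x = (f x).bind g := rfl

lemma mul_eq_mul_left_iff {f g h : PT n} : f * g = f * h ↔ Set.EqOn g h (pim f) := by
  refine ⟨?_, fun H => PEquiv.ext fun x => ?_⟩
  · rintro H v ⟨x, hx⟩
    simpa [mul_apply, hx] using congrArg (fun k : PT n => k x) H
  · rw [mul_apply, mul_apply]
    cases hx : f x with
    | none => rfl
    | some v => exact H ⟨x, hx⟩

lemma self_mul_symm (f : PT n) : f * f.symm = pid (pdom f) := by
  rw [mul_def, PEquiv.self_trans_symm]
  refine PEquiv.ext fun x => ?_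
  by_cases hx : x ∈ pdom f
  · rw [pid_apply_eq_some.2 ⟨rfl, hx⟩, PEquiv.ofSet_eq_some_self_iff]
    exact Option.isSome_iff_exists.2 hx
  · rw [pid_apply_eq_none.2 hx]
    exact if_neg (mt Option.isSome_iff_exists.1 hx)

lemma pid_mul_eq_self_iff {f : PT n} {A : Set (Fin n)} : pid A * f = f ↔ pdom f ⊆ A := by
  refine ⟨fun H x ⟨y, hy⟩ => ?_, fun H => PEquiv.ext fun x => ?_⟩
  · rw [← H, mul_apply, Option.bind_eq_some_iff] at hy
    obtain ⟨z, hz, -⟩ := hy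
    exact (pid_apply_eq_some.1 hz).2
  · rw [mul_apply]
    by_cases hx : x ∈ pdom f
    · rw [pid_apply_eq_some.2 ⟨rfl, H hx⟩, Option.bind_some]
    · rw [apply_eq_none_iff.2 hx, Option.bind_eq_none_iff]
      intro y hy
      rw [(pid_apply_eq_some.1 hy).1]
      exact apply_eq_none_iff.2 hx

lemma mul_pid_eq_self_iff {f : PT n} {A : Set (Fin n)} : f * pid A = f ↔ pim f ⊆ A := by
  conv_lhs => rhs; rw [← mul_one f]
  rw [mul_eq_mul_left_iff]
  refine forall₂_congr fun v _ => ?_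
  rw [show (1 : PT n) v = some v from rfl, pid_apply_eq_some]
  simp

lemma mul_eq_mul_right_iff {f g h : PT n} :
    g * f = h * f ↔ g * pid (pdom f) = h * pid (pdom f) := by
  refine ⟨fun H => ?_, fun H => ?_⟩
  · rw [← self_mul_symm, ← mul_assoc, ← mul_assoc, H]
  · have hf : pid (pdom f) * f = f := pid_mul_eq_self_iff.2 subset_rfl
    rw [← hf, ← mul_assoc, ← mul_assoc, H]

end PartialIdentity

section StarredGreen

variable {n : ℕ} {S : Set (PT n)} {a b : PT n}

lemma lStar_of_pim_eq (h : pim a = pim b) : LStar S a b := fun x _ y _ => by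
  rw [mul_eq_mul_left_iff, mul_eq_mul_left_iff, h]

lemma rStar_of_pdom_eq (h : pdom a = pdom b) : RStar S a b := fun x _ y _ => by
  rw [mul_eq_mul_right_iff (f := a), mul_eq_mul_right_iff (f := b), h]

lemma pim_eq_of_lStar (hS : ∀ A, pid A ∈ S) (h : LStar S a b) : pim a = pim b := by
  have key : ∀ A, pim a ⊆ A ↔ pim b ⊆ A := fun A => by
    simpa only [mul_one, mul_pid_eq_self_iff] using h _ (Or.inl (hS A)) 1 (Or.inr rfl)
  exact subset_antisymm ((key _).2 subset_rfl) ((key _).1 subset_rfl)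

lemma pdom_eq_of_rStar (hS : ∀ A, pid A ∈ S) (h : RStar S a b) : pdom a = pdom b := by
  have key : ∀ A, pdom a ⊆ A ↔ pdom b ⊆ A := fun A => by
    simpa only [one_mul, pid_mul_eq_self_iff] using h _ (Or.inl (hS A)) 1 (Or.inr rfl)
  exact subset_antisymm ((key _).2 subset_rfl) ((key _).1 subset_rfl)

lemma lStar_iff_pim_eq (hS : ∀ A, pid A ∈ S) : LStar S a b ↔ pim a = pim b :=
  ⟨pim_eq_of_lStar hS, lStar_of_pim_eq⟩

lemma rStar_iff_pdom_eq (hS : ∀ A, pid A ∈ S) : RStar S a b ↔ pdom a = pdom b :=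
  ⟨pdom_eq_of_rStar hS, rStar_of_pdom_eq⟩

end StarredGreen

section Isotone

variable {n : ℕ}

lemma apply_eq_some_getD {f : PT n} {x : Fin n} (hx : x ∈ pdom f) : f x = some ((f x).getD x) := by
  obtain ⟨y, hy⟩ := hx
  rw [hy, Option.getD_some]

/-- The default value `x` of `getD` is junk; it is never used when `D ⊆ pdom f`. -/
def restrictTo (f : PT n) (D : Set (Fin n)) (x : D) : Fin n := (f x).getD x

lemma strictMono_restrictTo {f : PT n} (hf : IsIso f) {D : Set (Fin n)} (hD : D ⊆ pdom f) :
    StrictMono (restrictTo f D) := fun x y hxy => by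
  have hx := apply_eq_some_getD (hD x.2)
  have hy := apply_eq_some_getD (hD y.2)
  refine lt_of_le_of_ne (hf _ _ _ _ hx hy hxy.le) fun h => hxy.ne ?_
  rw [restrictTo, restrictTo] at h
  rw [h] at hx
  exact Subtype.ext (PEquiv.inj f hx hy)

lemma range_restrictTo_pdom (f : PT n) : Set.range (restrictTo f (pdom f)) = pim f := by
  ext y
  constructor
  · rintro ⟨x, rfl⟩
    exact ⟨x, apply_eq_some_getD x.2⟩
  · rintro ⟨x, hx⟩
    exact ⟨⟨x, y, hx⟩, by simp [restrictTo, hx]⟩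

lemma eq_of_pdom_eq_of_pim_eq {f g : PT n} (hf : IsIso f) (hg : IsIso g)
    (hd : pdom f = pdom g) (hi : pim f = pim g) : f = g := by
  have hrange : Set.range (restrictTo f (pdom f)) = Set.range (restrictTo g (pdom f)) := by
    rw [range_restrictTo_pdom, hd, range_restrictTo_pdom, hi]
  have hrestrict := ((strictMono_restrictTo hf subset_rfl).range_inj
    (strictMono_restrictTo hg hd.subset)).1 hrange
  refine PEquiv.ext fun x => ?_
  by_cases hx : x ∈ pdom f
  · calc f x = some (restrictTo f (pdom f) ⟨x, hx⟩) := apply_eq_some_getD hx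
      _ = some (restrictTo g (pdom f) ⟨x, hx⟩) := by rw [hrestrict]
      _ = g x := (apply_eq_some_getD (hd ▸ hx)).symm
  · rw [apply_eq_none_iff.2 hx, apply_eq_none_iff.2 (hd ▸ hx)]

end Isotone

theorem stmt4_general (n : ℕ) :
    ∀ α ∈ IC n, ∀ β ∈ IC n,
      (LStar (IC n) α β ↔ pim α = pim β) ∧
      (RStar (IC n) α β ↔ pdom α = pdom β) ∧
      (HStar (IC n) α β ↔ α = β) := by
  intro α hα β hβ
  have hL := lStar_iff_pim_eq (a := α) (b := β) pid_mem_IC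
  have hR := rStar_iff_pdom_eq (a := α) (b := β) pid_mem_IC
  refine ⟨hL, hR, ⟨fun ⟨hl, hr⟩ => ?_, ?_⟩⟩
  · exact eq_of_pdom_eq_of_pim_eq hα.1 hβ.1 (hR.1 hr) (hL.1 hl)
  · rintro rfl
    exact ⟨fun _ _ _ _ => Iff.rfl, fun _ _ _ _ => Iff.rfl⟩

/-- for `α, β ∈ IC_n`: `α L* β ↔ im α = im β`; `α R* β ↔ dom α = dom β`;
`α H* β ↔ α = β`. -/
theorem stmt4 (n : ℕ) (hn : 0 < n) :
    ∀ α ∈ IC n, ∀ β ∈ IC n,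
      (LStar (IC n) α β ↔ pim α = pim β) ∧
      (RStar (IC n) α β ↔ pdom α = pdom β) ∧
      (HStar (IC n) α β ↔ α = β) :=
  stmt4_general n

end ICCatalan
end

section
/- A subsemigroup M of IC_n is maximal (proper, and contained in no proper subsemigroup other than itself) if and only if M = IC_n \ {γ}, where γ is one of: the identity map id_{[n]}; a partial identity ε_{[n]\{i}} with domain [n]\{i} for some 1 ≤ i ≤ n; or the essential element ε_{i,i+1} for some 1 ≤ i ≤ n−1, where ε_{i,i+1} has domain [n]\{i}, maps i+1 to i, and fixes every other point of its domain. Consequently, IC_n has exactly 2n maximal subsemigroups. -/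
open scoped Classical

namespace ICCatalan

/-- `M` is a subsemigroup of `S`. -/
def IsSubsgp {n : ℕ} (S M : Set (PT n)) : Prop :=
  M ⊆ S ∧ ∀ a ∈ M, ∀ b ∈ M, a * b ∈ M

/-- `M` is a maximal subsemigroup of `S`: a proper nonempty subsemigroup contained in
no subsemigroup of `S` other than itself and `S`. -/
def IsMaxSubsgp {n : ℕ} (S M : Set (PT n)) : Prop :=
  IsSubsgp S M ∧ M.Nonempty ∧ M ≠ S ∧
    ∀ T : Set (PT n), IsSubsgp S T → M ⊆ T → T = M ∨ T = S

/-!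
Call `γ` a generator if it is the identity, a partial identity `ε_{[n]∖{i}}` or an essential
element `ε_{i,i+1}`. Maps in `IC_n` are order-decreasing, so if `αβ = γ` then `α` and `β` fix
every point fixed by `γ`; since `γ` fixes all but one or two points, one of the factors is `γ`.
Hence `IC_n ∖ {γ}` is a subsemigroup, and therefore a maximal one. Conversely the `2n`
generators generate `IC_n`: partial identities are products of the `ε_{[n]∖{i}}`, and any
other `α` factors as `β ε_{j,j+1}` where `β` has smaller total displacement `∑ (x - xα)`.
So a maximal subsemigroup misses some generator `γ`, and by maximality it is `IC_n ∖ {γ}`.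
-/

section MaximalSubsemigroups

variable {n : ℕ} {S G M : Set (PT n)} {γ : PT n}

lemma isSubsgp_sdiff_singleton (hS : ∀ a ∈ S, ∀ b ∈ S, a * b ∈ S)
    (hγ : ∀ a ∈ S, ∀ b ∈ S, a * b = γ → a = γ ∨ b = γ) : IsSubsgp S (S \ {γ}) :=
  ⟨Set.sdiff_subset, fun a ha b hb =>
    ⟨hS a ha.1 b hb.1, fun hab => (hγ a ha.1 b hb.1 hab).elim ha.2 hb.2⟩⟩

lemma isMaxSubsgp_sdiff_singleton (hγS : γ ∈ S) (hne : (S \ {γ}).Nonempty)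
    (hsub : IsSubsgp S (S \ {γ})) : IsMaxSubsgp S (S \ {γ}) := by
  refine ⟨hsub, hne, (Set.sdiff_singleton_ssubset.2 hγS).ne, fun T hT hMT => ?_⟩
  by_cases hγT : γ ∈ T
  · exact Or.inr (hT.1.antisymm fun x hx =>
      if hxγ : x = γ then hxγ ▸ hγT else hMT ⟨hx, hxγ⟩)
  · exact Or.inl ((Set.subset_sdiff_singleton hT.1 hγT).antisymm hMT)

lemma exists_eq_sdiff_singleton_of_isMaxSubsgp
    (hG : ∀ γ ∈ G, γ ∈ S ∧ IsSubsgp S (S \ {γ}))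
    (hgen : ∀ T, IsSubsgp S T → G ⊆ T → S ⊆ T) (hM : IsMaxSubsgp S M) :
    ∃ γ ∈ G, M = S \ {γ} := by
  obtain ⟨hMsub, -, hMS, hMmax⟩ := hM
  obtain ⟨γ, hγG, hγM⟩ :=
    Set.not_subset.1 fun hGM => hMS (hMsub.1.antisymm (hgen M hMsub hGM))
  refine ⟨γ, hγG, ?_⟩
  rcases hMmax _ (hG γ hγG).2 (Set.subset_sdiff_singleton hMsub.1 hγM) with h | h
  · exact h.symm
  · exact absurd h (Set.sdiff_singleton_ssubset.2 (hG γ hγG).1).ne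

theorem isMaxSubsgp_iff_of_generators (hS : S.Nontrivial)
    (hG : ∀ γ ∈ G, γ ∈ S ∧ IsSubsgp S (S \ {γ}))
    (hgen : ∀ T, IsSubsgp S T → G ⊆ T → S ⊆ T) :
    IsMaxSubsgp S M ↔ ∃ γ ∈ G, M = S \ {γ} := by
  refine ⟨exists_eq_sdiff_singleton_of_isMaxSubsgp hG hgen, ?_⟩
  rintro ⟨γ, hγG, rfl⟩
  obtain ⟨x, hx, hxγ⟩ := hS.exists_ne γ
  exact isMaxSubsgp_sdiff_singleton (hG γ hγG).1 ⟨x, hx, hxγ⟩ (hG γ hγG).2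

theorem ncard_setOf_isMaxSubsgp_of_generators (hS : S.Nontrivial)
    (hG : ∀ γ ∈ G, γ ∈ S ∧ IsSubsgp S (S \ {γ}))
    (hgen : ∀ T, IsSubsgp S T → G ⊆ T → S ⊆ T) :
    {M | IsMaxSubsgp S M}.ncard = G.ncard := by
  have himage : {M | IsMaxSubsgp S M} = (fun γ => S \ {γ}) '' G := by
    ext M
    simp only [Set.mem_ofPred_eq, isMaxSubsgp_iff_of_generators hS hG hgen, Set.mem_image,
      eq_comm]
  rw [himage]
  refine Set.InjOn.ncard_image fun γ hγ γ' _ h => ?_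
  by_contra hne
  exact ((Set.ext_iff.1 h γ).2 ⟨(hG γ hγ).1, hne⟩).2 rfl

end MaximalSubsemigroups

section Basic

variable {n : ℕ}

lemma one_apply (x : Fin n) : (1 : PT n) x = some x := rfl

lemma pid_apply (A : Set (Fin n)) (x : Fin n) :
    pid A x = if x ∈ A then some x else none := rfl

lemma pid_univ : pid (Set.univ : Set (Fin n)) = 1 :=
  PEquiv.ext fun x => if_pos (Set.mem_univ x)

lemma pid_inter (A B : Set (Fin n)) : pid (A ∩ B) = pid A * pid B := by
  ext x y
  simp only [pid_apply, mul_apply, Set.mem_inter_iff]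
  split_ifs <;> simp_all [pid_apply]

lemma eq_of_apply_eq_some {f : PT n} {a b y : Fin n} (ha : f a = some y) (hb : f b = some y) :
    a = b :=
  f.inj ha hb

lemma one_mem_IC : (1 : PT n) ∈ IC n := pid_univ ▸ pid_mem_IC _

lemma mul_mem_IC {α β : PT n} (hα : α ∈ IC n) (hβ : β ∈ IC n) : α * β ∈ IC n := by
  refine ⟨fun x₁ x₂ y₁ y₂ h₁ h₂ hle => ?_, fun x y h => ?_⟩
  · obtain ⟨u₁, hu₁, hv₁⟩ := Option.bind_eq_some_iff.1 h₁
    obtain ⟨u₂, hu₂, hv₂⟩ := Option.bind_eq_some_iff.1 h₂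
    exact hβ.1 u₁ u₂ y₁ y₂ hv₁ hv₂ (hα.1 x₁ x₂ u₁ u₂ hu₁ hu₂ hle)
  · obtain ⟨u, hu, hv⟩ := Option.bind_eq_some_iff.1 h
    exact (hβ.2 u y hv).trans (hα.2 x u hu)

noncomputable def essential (i : Fin n) (hi : (i : ℕ) + 1 < n) : PT n where
  toFun x := if (x : ℕ) = i then none else if (x : ℕ) = i + 1 then some i else some x
  invFun y :=
    if (y : ℕ) = i + 1 then none else if (y : ℕ) = i then some ⟨i + 1, hi⟩ else some y
  inv a b := by
    split_ifs <;> simp_all [Fin.ext_iff] <;> omega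

lemma essential_apply (i : Fin n) (hi : (i : ℕ) + 1 < n) (x : Fin n) :
    essential i hi x =
      if (x : ℕ) = i then none else if (x : ℕ) = i + 1 then some i else some x :=
  rfl

lemma essential_symm_apply (i : Fin n) (hi : (i : ℕ) + 1 < n) (y : Fin n) :
    (essential i hi).symm y =
      if (y : ℕ) = i + 1 then none else if (y : ℕ) = i then some ⟨i + 1, hi⟩ else some y :=
  rfl

lemma essential_mem_IC (i : Fin n) (hi : (i : ℕ) + 1 < n) : essential i hi ∈ IC n := by
  refine ⟨fun x₁ x₂ y₁ y₂ h₁ h₂ hle => ?_, fun x y h => ?_⟩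
  · rw [essential_apply] at h₁ h₂
    rw [Fin.le_def] at hle ⊢
    split_ifs at h₁ h₂ <;> cases h₁ <;> cases h₂ <;> omega
  · rw [essential_apply] at h
    rw [Fin.le_def]
    split_ifs at h <;> cases h <;> omega

def generators (n : ℕ) : Set (PT n) :=
  {1} ∪ Set.range (fun i : Fin n => pid {i}ᶜ) ∪
    Set.range (fun i : {i : Fin n // (i : ℕ) + 1 < n} => essential i.1 i.2)

lemma mem_generators_iff {γ : PT n} :
    γ ∈ generators n ↔ γ = 1 ∨ (∃ i : Fin n, γ = pid {i}ᶜ) ∨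
      (∃ i : Fin n, (i : ℕ) + 1 < n ∧ ∀ x : Fin n,
        γ x = if (x : ℕ) = (i : ℕ) then none
          else if (x : ℕ) = (i : ℕ) + 1 then some i else some x) := by
  simp only [generators, Set.mem_union, Set.mem_singleton_iff, Set.mem_range, Subtype.exists,
    or_assoc]
  refine or_congr Iff.rfl (or_congr (exists_congr fun i => eq_comm) (exists_congr fun i => ?_))
  constructor
  · rintro ⟨hi, rfl⟩
    exact ⟨hi, essential_apply i hi⟩
  · rintro ⟨hi, h⟩
    exact ⟨hi, (PEquiv.ext h).symm⟩

lemma generators_subset_IC : generators n ⊆ IC n := by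
  rintro γ ((rfl | ⟨i, rfl⟩) | ⟨⟨i, hi⟩, rfl⟩)
  · exact one_mem_IC
  · exact pid_mem_IC _
  · exact essential_mem_IC i hi

end Basic

section Irreducible

variable {n : ℕ}

lemma apply_eq_self_of_mul_apply_eq_self {α β : PT n} (hα : IsDecr α) (hβ : IsDecr β)
    {x : Fin n} (h : (α * β) x = some x) : α x = some x ∧ β x = some x := by
  obtain ⟨u, hu, hβu⟩ := Option.bind_eq_some_iff.1 h
  obtain rfl : u = x := (hα x u hu).antisymm (hβ u x hβu)
  exact ⟨hu, hβu⟩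

lemma IsDecr.eq_of_apply_eq_some_of_forall_lt {α : PT n} (hα : IsDecr α) {x w : Fin n}
    (hfix : ∀ z < x, α z = some z) (hx : α x = some w) : w = x := by
  by_contra hne
  exact hne (eq_of_apply_eq_some (hfix w ((hα x w hx).lt_of_ne hne)) hx)

lemma IsDecr.apply_eq_none_of_forall_lt {α : PT n} (hα : IsDecr α) {x y : Fin n}
    (hfix : ∀ z < x, α z = some z) (hy : α y = some x) (hyx : y ≠ x) : α x = none := by
  rcases hx : α x with _ | w
  · rfl
  · obtain rfl := hα.eq_of_apply_eq_some_of_forall_lt hfix hx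
    exact absurd (eq_of_apply_eq_some hy hx) hyx

lemma eq_one_or_eq_one_of_mul_eq_one {α β : PT n} (hα : α ∈ IC n) (hβ : β ∈ IC n)
    (h : α * β = 1) : α = 1 ∨ β = 1 :=
  Or.inr <| PEquiv.ext fun x =>
    (apply_eq_self_of_mul_apply_eq_self hα.2 hβ.2 (by rw [h, one_apply])).2

lemma eq_pid_compl_singleton {f : PT n} {i : Fin n} (hfix : ∀ x ≠ i, f x = some x)
    (hi : f i = none) : f = pid {i}ᶜ := by
  ext1 x
  rw [pid_apply]
  by_cases hx : x = i
  · rw [hx, if_neg (by simp), hi]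
  · rw [if_pos (Set.mem_compl_singleton_iff.2 hx), hfix x hx]

lemma eq_or_eq_of_mul_eq_pid_compl_singleton {α β : PT n} {i : Fin n} (hα : α ∈ IC n)
    (hβ : β ∈ IC n) (h : α * β = pid {i}ᶜ) : α = pid {i}ᶜ ∨ β = pid {i}ᶜ := by
  have hfix : ∀ x ≠ i, α x = some x ∧ β x = some x := fun x hx =>
    apply_eq_self_of_mul_apply_eq_self hα.2 hβ.2
      (by rw [h, pid_apply, if_pos (Set.mem_compl_singleton_iff.2 hx)])
  rcases hαi : α i with _ | w
  · exact Or.inl (eq_pid_compl_singleton (fun x hx => (hfix x hx).1) hαi)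
  · obtain rfl := hα.2.eq_of_apply_eq_some_of_forall_lt (fun z hz => (hfix z hz.ne).1) hαi
    refine Or.inr (eq_pid_compl_singleton (fun x hx => (hfix x hx).2) ?_)
    have hw : (α * β) w = none := by rw [h, pid_apply, if_neg (by simp)]
    simpa [mul_apply, hαi] using hw

lemma eq_essential {f : PT n} {i : Fin n} (hi : (i : ℕ) + 1 < n)
    (hfix : ∀ x : Fin n, (x : ℕ) ≠ i → (x : ℕ) ≠ i + 1 → f x = some x)
    (hnone : f i = none) (hsucc : f ⟨i + 1, hi⟩ = some i) : f = essential i hi := by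
  ext1 x
  rw [essential_apply]
  by_cases h₁ : (x : ℕ) = i
  · rw [if_pos h₁, Fin.ext h₁, hnone]
  by_cases h₂ : (x : ℕ) = i + 1
  · rw [if_neg h₁, if_pos h₂, ← hsucc, show x = ⟨i + 1, hi⟩ from Fin.ext h₂]
  · rw [if_neg h₁, if_neg h₂, hfix x h₁ h₂]

lemma eq_or_eq_of_mul_eq_essential {α β : PT n} {i : Fin n} (hi : (i : ℕ) + 1 < n)
    (hα : α ∈ IC n) (hβ : β ∈ IC n) (h : α * β = essential i hi) :
    α = essential i hi ∨ β = essential i hi := by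
  have hfix (x : Fin n) (h₁ : (x : ℕ) ≠ i) (h₂ : (x : ℕ) ≠ i + 1) :
      α x = some x ∧ β x = some x :=
    apply_eq_self_of_mul_apply_eq_self hα.2 hβ.2
      (by rw [h, essential_apply, if_neg h₁, if_neg h₂])
  have hbelow (z : Fin n) (hz : z < i) : α z = some z ∧ β z = some z := by
    rw [Fin.lt_def] at hz
    exact hfix z (by omega) (by omega)
  have hsucc_ne : (⟨i + 1, hi⟩ : Fin n) ≠ i := by simp [Fin.ext_iff]
  have hsucc : (α * β) ⟨i + 1, hi⟩ = some i := by simp [h, essential_apply]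
  obtain ⟨u, hαu, hβu⟩ := Option.bind_eq_some_iff.1 hsucc
  have hu : u = i ∨ u = ⟨i + 1, hi⟩ := by
    have h₁ := Fin.le_def.1 (hα.2 _ u hαu)
    have h₂ := Fin.le_def.1 (hβ.2 u i hβu)
    simp only [Fin.ext_iff] at h₁ ⊢
    omega
  rcases hu with rfl | rfl
  · refine Or.inl (eq_essential hi (fun x h₁ h₂ => (hfix x h₁ h₂).1) ?_ hαu)
    exact hα.2.apply_eq_none_of_forall_lt (fun z hz => (hbelow z hz).1) hαu hsucc_ne
  · refine Or.inr (eq_essential hi (fun x h₁ h₂ => (hfix x h₁ h₂).2) ?_ hβu)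
    exact hβ.2.apply_eq_none_of_forall_lt (fun z hz => (hbelow z hz).2) hβu hsucc_ne

lemma eq_or_eq_of_mul_eq_of_mem_generators {α β γ : PT n} (hγ : γ ∈ generators n)
    (hα : α ∈ IC n) (hβ : β ∈ IC n) (h : α * β = γ) : α = γ ∨ β = γ := by
  rcases hγ with (rfl | ⟨i, rfl⟩) | ⟨⟨i, hi⟩, rfl⟩
  · exact eq_one_or_eq_one_of_mul_eq_one hα hβ h
  · exact eq_or_eq_of_mul_eq_pid_compl_singleton hα hβ h
  · exact eq_or_eq_of_mul_eq_essential hi hα hβ h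

end Irreducible

section Generation

variable {n : ℕ}

lemma pid_mem_of_pid_compl_singleton_mem {T : Set (PT n)}
    (hT : ∀ a ∈ T, ∀ b ∈ T, a * b ∈ T) (hone : (1 : PT n) ∈ T)
    (hpid : ∀ i : Fin n, pid {i}ᶜ ∈ T) (A : Set (Fin n)) :
    pid A ∈ T := by
  suffices h : ∀ s : Finset (Fin n), pid (↑s)ᶜ ∈ T by simpa using h Aᶜ.toFinset
  intro s
  induction s using Finset.induction_on with
  | empty => simpa [pid_univ] using hone
  | insert i s _ ih =>
    rw [Finset.coe_insert, Set.insert_eq, Set.compl_union, pid_inter]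
    exact hT _ (hpid i) _ ih

/-- `∑_{x ∈ dom α} (x - xα)`: points outside the domain contribute `0`. -/
noncomputable def displacement (α : PT n) : ℕ :=
  ∑ x : Fin n, ((x : ℕ) - ((α x).getD x : ℕ))

lemma displacement_eq_zero_iff {α : PT n} (hα : IsDecr α) :
    displacement α = 0 ↔ ∀ x w, α x = some w → w = x := by
  simp only [displacement, Finset.sum_eq_zero_iff, Finset.mem_univ, true_implies,
    Nat.sub_eq_zero_iff_le, Fin.val_fin_le]
  refine ⟨fun h x w hw => (hα x w hw).antisymm (by simpa [hw] using h x), fun h x => ?_⟩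
  rcases hx : α x with _ | w
  · rfl
  · rw [Option.getD_some, h x w hx]

lemma eq_pid_pdom {α : PT n} (h : ∀ x w, α x = some w → w = x) : α = pid (pdom α) := by
  ext1 x
  rw [pid_apply]
  rcases hx : α x with _ | w
  · rw [if_neg]
    rintro ⟨y, hy⟩
    rw [hx] at hy
    cases hy
  · obtain rfl := h x w hx
    rw [if_pos ⟨_, hx⟩]

lemma exists_max_moved {α : PT n} (hα : IsDecr α) (h0 : displacement α ≠ 0) :
    ∃ x j, α x = some j ∧ j < x ∧ ∀ y, x < y → ∀ w, α y = some w → w = y := by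
  obtain ⟨x₀, w₀, hx₀, hw₀⟩ : ∃ x w, α x = some w ∧ w ≠ x := by
    simpa [displacement_eq_zero_iff hα] using h0
  obtain ⟨x, hx, hmax⟩ :=
    (Finset.univ.filter fun x => ∃ w, α x = some w ∧ w ≠ x).exists_max_image id
      ⟨x₀, Finset.mem_filter.2 ⟨Finset.mem_univ _, w₀, hx₀, hw₀⟩⟩
  obtain ⟨j, hαx, hjx⟩ := (Finset.mem_filter.1 hx).2
  refine ⟨x, j, hαx, (hα x j hαx).lt_of_ne hjx, fun y hxy w hy => ?_⟩
  by_contra hne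
  exact hxy.not_ge (hmax y (Finset.mem_filter.2 ⟨Finset.mem_univ y, w, hy, hne⟩))

lemma mem_IC_of_forall_ne_apply_eq {α β : PT n} (hα : α ∈ IC n) {x j k : Fin n}
    (hαx : α x = some j) (hβx : β x = some k) (hβ : ∀ z ≠ x, β z = α z)
    (hjk : j ≤ k) (hkx : k ≤ x) (hk : ∀ z w, α z = some w → j < w → k ≤ w) :
    β ∈ IC n := by
  refine ⟨fun z₁ z₂ y₁ y₂ h₁ h₂ hle => ?_, fun z y h => ?_⟩
  · by_cases hz₁ : z₁ = x <;> by_cases hz₂ : z₂ = x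
    · rw [hz₁, hβx] at h₁
      rw [hz₂, hβx] at h₂
      cases h₁; cases h₂; exact le_rfl
    · rw [hz₁, hβx] at h₁
      rw [hβ z₂ hz₂] at h₂
      cases h₁
      have hjy : j ≤ y₂ := hα.1 x z₂ j y₂ hαx h₂ (hz₁ ▸ hle)
      refine hk z₂ y₂ h₂ (hjy.lt_of_ne fun hj => hz₂ ?_)
      exact eq_of_apply_eq_some h₂ (hj ▸ hαx)
    · rw [hβ z₁ hz₁] at h₁
      rw [hz₂, hβx] at h₂
      cases h₂
      exact (hα.1 z₁ x y₁ j h₁ hαx (hz₂ ▸ hle)).trans hjk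
    · rw [hβ z₁ hz₁] at h₁
      rw [hβ z₂ hz₂] at h₂
      exact hα.1 z₁ z₂ y₁ y₂ h₁ h₂ hle
  · by_cases hz : z = x
    · rw [hz, hβx] at h
      cases h
      exact hz ▸ hkx
    · exact hα.2 z y (hβ z hz ▸ h)

lemma displacement_lt_of_forall_ne_apply_eq {α β : PT n} {x j k : Fin n}
    (hαx : α x = some j) (hβx : β x = some k) (hβ : ∀ z ≠ x, β z = α z)
    (hjk : j < k) (hjx : j < x) : displacement β < displacement α := by
  rw [Fin.lt_def] at hjk hjx
  refine Finset.sum_lt_sum (fun z _ => ?_) ⟨x, Finset.mem_univ x, ?_⟩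
  · by_cases hz : z = x
    · rw [hz, hβx, hαx]
      simp only [Option.getD_some]
      omega
    · rw [hβ z hz]
  · simp only [hβx, hαx, Option.getD_some]
    omega

lemma val_ne_of_apply_eq_some_of_forall_gt {α : PT n} (hα : α ∈ IC n) {x j z w : Fin n}
    (hαx : α x = some j) (hjx : j < x) (hfix : ∀ y, x < y → ∀ w, α y = some w → w = y)
    (hz : z ≠ x) (hw : α z = some w) : (w : ℕ) ≠ j ∧ (w : ℕ) ≠ j + 1 := by
  refine ⟨fun h => hz (eq_of_apply_eq_some hw (Fin.ext h ▸ hαx)), ?_⟩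
  rw [Fin.lt_def] at hjx
  rcases lt_or_gt_of_ne hz with hzx | hxz
  · have := Fin.le_def.1 (hα.1 z x w j hw hαx hzx.le)
    omega
  · rw [hfix z hxz w hw]
    rw [Fin.lt_def] at hxz
    omega

/-- The factor `β` raises the image `j` of the largest moved point `x` of `α` to `j + 1`.
Maximality of `x` keeps `j + 1` out of the image of `α`, which makes `β` isotone and
`β ε_{j,j+1} = α`. -/
lemma exists_mul_essential_eq {α : PT n} (hα : α ∈ IC n) (h0 : displacement α ≠ 0) :
    ∃ β ∈ IC n, ∃ (j : Fin n) (hj : (j : ℕ) + 1 < n),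
      β * essential j hj = α ∧ displacement β < displacement α := by
  obtain ⟨x, j, hαx, hjx, hfix⟩ := exists_max_moved hα.2 h0
  have hj : (j : ℕ) + 1 < n := by have := x.isLt; rw [Fin.lt_def] at hjx; omega
  have hother : ∀ z ≠ x, ∀ w, α z = some w → (w : ℕ) ≠ j ∧ (w : ℕ) ≠ j + 1 :=
    fun z hz w hw => val_ne_of_apply_eq_some_of_forall_gt hα hαx hjx hfix hz hw
  set β := α * (essential j hj).symm
  have hβx : β x = some ⟨j + 1, hj⟩ := by
    rw [mul_apply, hαx, Option.bind_some, essential_symm_apply, if_neg (by omega), if_pos rfl]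
  have hβ : ∀ z ≠ x, β z = α z := by
    intro z hz
    rcases hαz : α z with _ | w
    · rw [mul_apply, hαz, Option.bind_none]
    · obtain ⟨hwj, hwj'⟩ := hother z hz w hαz
      rw [mul_apply, hαz, Option.bind_some, essential_symm_apply, if_neg hwj', if_neg hwj]
  refine ⟨β, mem_IC_of_forall_ne_apply_eq hα hαx hβx hβ ?_ ?_ ?_, j, hj, ?_, ?_⟩
  · exact Fin.le_def.2 (Nat.le_succ _)
  · exact Fin.le_def.2 hjx
  · intro z w hw hjw
    rw [Fin.lt_def] at hjw
    have hz : z ≠ x := by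
      rintro rfl
      rw [hαx] at hw
      cases hw
      omega
    have := (hother z hz w hw).2
    exact Fin.le_def.2 (show (j : ℕ) + 1 ≤ w by omega)
  · ext1 z
    by_cases hz : z = x
    · rw [hz, mul_apply, hβx, Option.bind_some, essential_apply, if_neg (by simp), if_pos rfl,
        hαx]
    · rw [mul_apply, hβ z hz]
      rcases hαz : α z with _ | w
      · rfl
      · obtain ⟨hwj, hwj'⟩ := hother z hz w hαz
        rw [Option.bind_some, essential_apply, if_neg hwj, if_neg hwj']
  · exact displacement_lt_of_forall_ne_apply_eq hαx hβx hβ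
      (Fin.lt_def.2 (Nat.lt_succ_self _)) hjx

theorem IC_subset_of_generators_subset {T : Set (PT n)}
    (hT : ∀ a ∈ T, ∀ b ∈ T, a * b ∈ T) (hG : generators n ⊆ T) : IC n ⊆ T := by
  intro α hα
  induction hd : displacement α using Nat.strong_induction_on generalizing α with
  | _ d ih =>
    by_cases h0 : displacement α = 0
    · rw [eq_pid_pdom ((displacement_eq_zero_iff hα.2).1 h0)]
      exact pid_mem_of_pid_compl_singleton_mem hT (hG (Or.inl (Or.inl rfl)))
        (fun i => hG (Or.inl (Or.inr ⟨i, rfl⟩))) _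
    · obtain ⟨β, hβ, j, hj, rfl, hlt⟩ := exists_mul_essential_eq hα h0
      exact hT _ (ih _ (hd ▸ hlt) hβ rfl) _ (hG (Or.inr ⟨⟨j, hj⟩, rfl⟩))

end Generation

section Counting

variable {n : ℕ}

lemma one_ne_pid_compl_singleton (i : Fin n) : (1 : PT n) ≠ pid {i}ᶜ := fun h => by
  simpa [one_apply, pid_apply] using DFunLike.congr_fun h i

lemma one_ne_essential (i : Fin n) (hi : (i : ℕ) + 1 < n) :
    (1 : PT n) ≠ essential i hi := fun h => by
  simpa [one_apply, essential_apply] using DFunLike.congr_fun h i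

lemma pid_compl_singleton_ne_essential (i j : Fin n) (hj : (j : ℕ) + 1 < n) :
    pid {i}ᶜ ≠ essential j hj := fun h => by
  have := DFunLike.congr_fun h ⟨j + 1, hj⟩
  rw [pid_apply, essential_apply] at this
  split_ifs at this <;> simp_all [Fin.ext_iff]

lemma pid_compl_singleton_injective :
    Function.Injective fun i : Fin n => pid {i}ᶜ := fun i j h => by
  by_contra hne
  simpa [pid_apply, hne] using DFunLike.congr_fun h i

lemma essential_injective :
    Function.Injective fun i : {i : Fin n // (i : ℕ) + 1 < n} => essential i.1 i.2 := by
  intro i j h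
  by_contra hne
  have hij : (i.1 : ℕ) ≠ j.1 := fun h' => hne (Subtype.ext (Fin.ext h'))
  have := DFunLike.congr_fun h i.1
  rw [essential_apply, essential_apply, if_pos rfl, if_neg hij] at this
  split_ifs at this

lemma natCard_subtype_val_add_one_lt : Nat.card {i : Fin n // (i : ℕ) + 1 < n} = n - 1 :=
  (Nat.card_congr
    { toFun := fun i => ⟨i.1, by have := i.2; omega⟩
      invFun := fun k =>
        ⟨⟨k, by have := k.isLt; omega⟩, show (k : ℕ) + 1 < n by have := k.isLt; omega⟩
      left_inv := fun _ => rfl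
      right_inv := fun _ => rfl }).trans (Nat.card_fin _)

lemma ncard_generators (hn : 0 < n) : (generators n).ncard = 2 * n := by
  have h₁ : Disjoint ({1} : Set (PT n)) (Set.range fun i : Fin n => pid {i}ᶜ) :=
    Set.disjoint_singleton_left.2 fun ⟨i, hi⟩ => one_ne_pid_compl_singleton i hi.symm
  have h₂ : Disjoint ({1} ∪ Set.range fun i : Fin n => pid {i}ᶜ)
      (Set.range fun i : {i : Fin n // (i : ℕ) + 1 < n} => essential i.1 i.2) := by
    refine Set.disjoint_union_left.2 ⟨Set.disjoint_singleton_left.2 ?_, ?_⟩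
    · rintro ⟨i, hi⟩
      exact one_ne_essential i.1 i.2 hi.symm
    · rw [Set.disjoint_left]
      rintro _ ⟨i, rfl⟩ ⟨j, hj⟩
      exact pid_compl_singleton_ne_essential i j.1 j.2 hj.symm
  rw [generators, Set.ncard_union_eq h₂, Set.ncard_union_eq h₁, Set.ncard_singleton,
    Set.ncard_range_of_injective pid_compl_singleton_injective,
    Set.ncard_range_of_injective essential_injective, natCard_subtype_val_add_one_lt,
    Nat.card_fin]
  omega

end Counting

/-- the maximal subsemigroups of `IC_n` are exactly the sets `IC_n \ {γ}`
where `γ` is the identity, a partial identity on the complement of a point, or an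
essential element `ε_{i,i+1}` (domain `[n] \ {i}`, sending `i+1` to `i` and fixing the
rest); consequently `IC_n` has exactly `2n` maximal subsemigroups. -/
theorem stmt8 (n : ℕ) (hn : 0 < n) :
    (∀ M : Set (PT n), IsMaxSubsgp (IC n) M ↔
      ∃ γ : PT n, M = IC n \ {γ} ∧
        (γ = 1 ∨
         (∃ i : Fin n, γ = pid {i}ᶜ) ∨
         (∃ i : Fin n, (i : ℕ) + 1 < n ∧ ∀ x : Fin n,
            γ x = if (x : ℕ) = (i : ℕ) then none
              else if (x : ℕ) = (i : ℕ) + 1 then some i else some x))) ∧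
    {M : Set (PT n) | IsMaxSubsgp (IC n) M}.ncard = 2 * n := by
  have hIC : (IC n).Nontrivial := ⟨1, one_mem_IC, pid {⟨0, hn⟩}ᶜ, pid_mem_IC _,
    one_ne_pid_compl_singleton _⟩
  have hG : ∀ γ ∈ generators n, γ ∈ IC n ∧ IsSubsgp (IC n) (IC n \ {γ}) := fun γ hγ =>
    ⟨generators_subset_IC hγ, isSubsgp_sdiff_singleton (fun _ ha _ hb => mul_mem_IC ha hb)
      fun _ ha _ hb => eq_or_eq_of_mul_eq_of_mem_generators hγ ha hb⟩
  have hgen : ∀ T, IsSubsgp (IC n) T → generators n ⊆ T → IC n ⊆ T :=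
    fun _ hT => IC_subset_of_generators_subset hT.2
  refine ⟨fun M => ?_, ?_⟩
  · rw [isMaxSubsgp_iff_of_generators hIC hG hgen]
    exact exists_congr fun γ => by rw [mem_generators_iff, and_comm]
  · rw [ncard_setOf_isMaxSubsgp_of_generators hIC hG hgen, ncard_generators hn]

end ICCatalan
end

section
/- Every element α ∈ IC_n of shift 1 (i.e., with exactly one point y ∈ dom α such that yα ≠ y) is a finite product of essential elements of IC_n, each of the same height |im α| as α. -/
open scoped Classical

namespace ICCatalan

/-!
An element of shift one fixes a set `F` pointwise and moves a single point `y` down to `z`;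
isotonicity forces `F` to avoid the whole interval `[z, y]`. Such a map factors as the map
sending `y` to `z + 1` (same `F`), followed by the essential map sending `z + 1` to `z`: since
`z + 1 ∉ F`, both factors still lie in `IC_n`, and all three maps have image of size `|F| + 1`.
Induction on `y - z` finishes the proof.
-/

-- `z` is removed from the fixed points so that the map is injective for every `F`.
noncomputable def fixMove {n : ℕ} (F : Set (Fin n)) (y z : Fin n) : PT n where
  toFun x := if x = y then some z else if x ∈ F ∧ x ≠ z then some x else none
  invFun u := if u = z then some y else if u ∈ F ∧ u ≠ y then some u else none
  inv x u := by split_ifs <;> grind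

section fixMove

variable {n : ℕ} {F : Set (Fin n)} {x y z u : Fin n}

theorem fixMove_apply_eq_some :
    fixMove F y z x = some u ↔ x = y ∧ u = z ∨ x ≠ y ∧ x ∈ F ∧ x ≠ z ∧ u = x := by
  simp only [fixMove, PEquiv.coe_mk_apply]
  split_ifs <;> grind

theorem pim_fixMove : pim (fixMove F y z) = insert z (F \ {y}) := by
  ext u
  simp only [pim, fixMove_apply_eq_some]
  grind

theorem height_fixMove (hy : y ∉ F) (hz : z ∉ F) : height (fixMove F y z) = F.ncard + 1 := by
  rw [height, pim_fixMove, Set.sdiff_singleton_eq_self hy,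
    Set.ncard_insert_of_notMem hz (Set.toFinite F)]

theorem fixMove_mul_fixMove {w : Fin n} (hw : w ∉ F) :
    fixMove F y w * fixMove F w z = fixMove F y z := by
  ext x u
  rw [mul_def, PEquiv.trans_eq_some]
  simp only [fixMove_apply_eq_some]
  grind

theorem fixMove_mem_IC (hzy : z ≤ y) (hF : ∀ x ∈ F, x ∉ Set.Icc z y) :
    fixMove F y z ∈ IC n := by
  refine ⟨fun x₁ x₂ y₁ y₂ h₁ h₂ hx => ?_, fun x u h => ?_⟩
  · rw [fixMove_apply_eq_some] at h₁ h₂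
    grind
  · rw [fixMove_apply_eq_some] at h
    grind

theorem isEssential_fixMove (h : (z : ℕ) + 1 = y) : IsEssential (fixMove F y z) :=
  ⟨y, z, fixMove_apply_eq_some.2 (.inl ⟨rfl, rfl⟩), h, fun x w hx hwx => by
    rw [fixMove_apply_eq_some] at hx
    grind⟩

end fixMove

theorem fixMove_mem_closure {n : ℕ} {F : Set (Fin n)} {y z : Fin n} (hzy : z < y)
    (hF : ∀ x ∈ F, x ∉ Set.Icc z y) :
    fixMove F y z ∈ Subsemigroup.closure
      {β : PT n | β ∈ IC n ∧ IsEssential β ∧ height β = F.ncard + 1} := by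
  obtain ⟨k, hk⟩ : ∃ k, (y : ℕ) = z + k + 1 := Nat.exists_eq_add_of_lt hzy
  induction k generalizing z with
  | zero =>
    exact Subsemigroup.subset_closure ⟨fixMove_mem_IC hzy.le hF, isEssential_fixMove hk.symm,
      height_fixMove (fun h => hF y h ⟨hzy.le, le_rfl⟩) (fun h => hF z h ⟨le_rfl, hzy.le⟩)⟩
  | succ k ih =>
    set w : Fin n := ⟨z + 1, by omega⟩
    have hzw : z < w := Fin.lt_def.2 (Nat.lt_succ_self _)
    have hwy : w < y := Fin.lt_def.2 (by simp [w]; omega)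
    have hFw : ∀ x ∈ F, x ∉ Set.Icc w y := fun x hx hxI => hF x hx ⟨hzw.le.trans hxI.1, hxI.2⟩
    have hFz : ∀ x ∈ F, x ∉ Set.Icc z w := fun x hx hxI => hF x hx ⟨hxI.1, hxI.2.trans hwy.le⟩
    have hwF : w ∉ F := fun h => hF w h ⟨hzw.le, hwy.le⟩
    rw [← fixMove_mul_fixMove hwF]
    refine Subsemigroup.mul_mem _ (ih hwy hFw (by simp [w]; omega)) (Subsemigroup.subset_closure
      ⟨fixMove_mem_IC hzw.le hFz, isEssential_fixMove rfl,
        height_fixMove hwF fun h => hFz z h ⟨le_rfl, hzw.le⟩⟩)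

theorem exists_fixMove_eq_of_shift_eq_one {n : ℕ} {α : PT n} (hα : α ∈ IC n) (h : shift α = 1) :
    ∃ F y z, z < y ∧ (∀ x ∈ F, x ∉ Set.Icc z y) ∧ α = fixMove F y z := by
  obtain ⟨y, hmoved⟩ := Set.ncard_eq_one.1 h
  obtain ⟨z, hyz, hzy_ne⟩ : ∃ z, α y = some z ∧ z ≠ y := (Set.ext_iff.1 hmoved y).2 rfl
  have hfix : ∀ x u, α x = some u → x ≠ y → u = x := fun x u hx hxy =>
    by_contra fun hux => hxy ((Set.ext_iff.1 hmoved x).1 ⟨u, hx, hux⟩)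
  have hzy : z < y := lt_of_le_of_ne (hα.2 y z hyz) hzy_ne
  refine ⟨pdom α \ {y}, y, z, hzy, fun x ⟨⟨u, hxu⟩, hxy⟩ ⟨hzx, hxy'⟩ => ?_, ?_⟩
  · obtain rfl := hfix x u hxu hxy
    obtain rfl : u = z := le_antisymm (hα.1 u y u z hxu hyz hxy') hzx
    exact hxy (α.inj hxu hyz)
  · ext x u
    rw [fixMove_apply_eq_some]
    constructor
    · intro hxu
      by_cases hxy : x = y
      · subst hxy
        exact .inl ⟨rfl, Option.some_injective _ (hxu.symm.trans hyz)⟩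
      · obtain rfl := (hfix x u hxu hxy).symm
        refine .inr ⟨hxy, ⟨⟨x, hxu⟩, hxy⟩, fun hxz => hxy (α.inj ?_ hyz), rfl⟩
        rwa [← hxz]
    · rintro (⟨rfl, rfl⟩ | ⟨hxy, ⟨⟨v, hxv⟩, -⟩, -, rfl⟩)
      · exact hyz
      · rwa [hfix u v hxv hxy] at hxv

theorem stmt11_general (n : ℕ) :
    ∀ α ∈ IC n, shift α = 1 →
      α ∈ Subsemigroup.closure
        {β : PT n | β ∈ IC n ∧ IsEssential β ∧ height β = height α} := by
  intro α hα hshift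
  obtain ⟨F, y, z, hzy, hF, rfl⟩ := exists_fixMove_eq_of_shift_eq_one hα hshift
  rw [height_fixMove (fun h => hF y h ⟨hzy.le, le_rfl⟩) (fun h => hF z h ⟨le_rfl, hzy.le⟩)]
  exact fixMove_mem_closure hzy hF

/-- every element `α ∈ IC_n` of shift `1` is a finite product of essential
elements of `IC_n`, each of the same height `|im α|` as `α`. -/
theorem stmt11 (n : ℕ) (hn : 0 < n) :
    ∀ α ∈ IC n, shift α = 1 →
      α ∈ Subsemigroup.closure
        {β : PT n | β ∈ IC n ∧ IsEssential β ∧ height β = height α} :=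
  stmt11_general n

end ICCatalan
end

section
/- For 1 ≤ p ≤ n−1, the number of essential elements α ∈ IC_n with |im α| = p equals (n−1)·C(n−2, p−1), where C denotes the binomial coefficient. -/
open scoped Classical

namespace ICCatalan

/-!
An essential element fixes every point of its domain except one point `y > 1`, which it
sends to `y - 1`; by injectivity `y - 1` is not fixed, and any such partial map is automatically
isotone and order-decreasing. So the essential elements of height `p` correspond bijectively to
the pairs `(y, A)` with `y ∈ {2, …, n}` and `A ⊆ [n] ∖ {y - 1, y}` a set of `p - 1` fixed points,
of which there are `(n - 1)·C(n - 2, p - 1)`.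
-/

/-- The point `y - 1`, truncated at `0`. -/
def predF {n : ℕ} (y : Fin n) : Fin n := ⟨y.val - 1, by omega⟩

lemma predF_ne_self {n : ℕ} {y : Fin n} (hy : 0 < y.val) : predF y ≠ y := by
  simp only [ne_eq, Fin.ext_iff, predF]; omega

/-- The partial identity on `A ∪ {y}` followed by the transposition of `y` and `y - 1`:
when `y, y - 1 ∉ A` it fixes `A` pointwise and sends `y` to `y - 1`. -/
noncomputable def essMap {n : ℕ} (y : Fin n) (A : Finset (Fin n)) : PT n :=
  (PEquiv.ofSet (insert y (A : Set (Fin n)))).trans (Equiv.swap y (predF y)).toPEquiv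

section essMap

variable {n : ℕ} {y : Fin n} {A : Finset (Fin n)}

lemma essMap_eq_some_iff (hyA : y ∉ A) (hpA : predF y ∉ A) {x w : Fin n} :
    essMap y A x = some w ↔ (x = y ∧ w = predF y) ∨ (x ∈ A ∧ w = x) := by
  have hfix : ∀ a ∈ A, Equiv.swap y (predF y) a = a := fun a ha =>
    Equiv.swap_apply_of_ne_of_ne (by rintro rfl; exact hyA ha) (by rintro rfl; exact hpA ha)
  simp only [essMap, PEquiv.trans_eq_some, PEquiv.ofSet_eq_some_iff, Equiv.toPEquiv_apply,
    Option.some_inj, Set.mem_insert_iff, Finset.mem_coe]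
  constructor
  · rintro ⟨_, ⟨rfl, rfl | hx⟩, rfl⟩
    · exact Or.inl ⟨rfl, Equiv.swap_apply_left _ _⟩
    · exact Or.inr ⟨hx, hfix _ hx⟩
  · rintro (⟨rfl, rfl⟩ | ⟨hx, rfl⟩)
    · exact ⟨_, ⟨rfl, Or.inl rfl⟩, Equiv.swap_apply_left _ _⟩
    · exact ⟨_, ⟨rfl, Or.inr hx⟩, hfix _ hx⟩

lemma essMap_eq_some_self_iff (hy : 0 < y.val) (hyA : y ∉ A) (hpA : predF y ∉ A) {x : Fin n} :
    essMap y A x = some x ↔ x ∈ A := by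
  rw [essMap_eq_some_iff hyA hpA]
  constructor
  · rintro (⟨rfl, h⟩ | ⟨hx, -⟩)
    · exact absurd h.symm (predF_ne_self hy)
    · exact hx
  · exact fun hx => Or.inr ⟨hx, rfl⟩

lemma essMap_apply_self (hyA : y ∉ A) (hpA : predF y ∉ A) : essMap y A y = some (predF y) :=
  (essMap_eq_some_iff hyA hpA).2 (Or.inl ⟨rfl, rfl⟩)

lemma height_essMap (hyA : y ∉ A) (hpA : predF y ∉ A) : height (essMap y A) = A.card + 1 := by
  have him : pim (essMap y A) = insert (predF y) (A : Set (Fin n)) := by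
    ext w
    simp only [pim, Set.mem_ofPred_eq, essMap_eq_some_iff hyA hpA, Set.mem_insert_iff,
      Finset.mem_coe]
    aesop
  rw [height, him, Set.ncard_insert_of_notMem (by simpa using hpA), Set.ncard_coe_finset]

lemma essMap_mem_IC (hyA : y ∉ A) (hpA : predF y ∉ A) : essMap y A ∈ IC n := by
  have hpred : predF y ≤ y := Fin.le_def.2 (Nat.sub_le _ _)
  have hA : ∀ a ∈ A, a.val ≠ y.val := fun a ha h => hyA (Fin.ext h ▸ ha)
  refine ⟨fun x₁ x₂ w₁ w₂ h₁ h₂ hle => ?_, fun x w h => ?_⟩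
  · rw [essMap_eq_some_iff hyA hpA] at h₁ h₂
    rcases h₁ with ⟨rfl, rfl⟩ | ⟨hx₁, rfl⟩ <;> rcases h₂ with ⟨rfl, rfl⟩ | ⟨hx₂, rfl⟩
    · exact le_rfl
    · exact hpred.trans hle
    · have := hA _ hx₁
      simp only [Fin.le_def, predF] at hle ⊢
      omega
    · exact hle
  · rw [essMap_eq_some_iff hyA hpA] at h
    rcases h with ⟨rfl, rfl⟩ | ⟨-, rfl⟩
    · exact hpred
    · exact le_rfl

lemma isEssential_essMap (hy : 0 < y.val) (hyA : y ∉ A) (hpA : predF y ∉ A) :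
    IsEssential (essMap y A) := by
  refine ⟨y, predF y, essMap_apply_self hyA hpA, by simp only [predF]; omega, ?_⟩
  intro x w h hne
  rw [essMap_eq_some_iff hyA hpA] at h
  rcases h with ⟨rfl, -⟩ | ⟨-, rfl⟩
  · rfl
  · exact absurd rfl hne

lemma eq_and_eq_of_essMap_eq {y' : Fin n} {A' : Finset (Fin n)}
    (hy : 0 < y.val) (hyA : y ∉ A) (hpA : predF y ∉ A)
    (hy' : 0 < y'.val) (hyA' : y' ∉ A') (hpA' : predF y' ∉ A')
    (h : essMap y A = essMap y' A') : y = y' ∧ A = A' := by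
  obtain rfl : y = y' := by
    have hmoved := essMap_apply_self hyA hpA
    rw [h, essMap_eq_some_iff hyA' hpA'] at hmoved
    rcases hmoved with ⟨rfl, -⟩ | ⟨-, hfix⟩
    · rfl
    · exact absurd hfix (predF_ne_self hy)
  refine ⟨rfl, Finset.ext fun x => ?_⟩
  rw [← essMap_eq_some_self_iff hy hyA hpA, ← essMap_eq_some_self_iff hy' hyA' hpA', h]

end essMap

lemma IsEssential.exists_eq_essMap {n : ℕ} {f : PT n} (he : IsEssential f) :
    ∃ y A, 0 < y.val ∧ y ∉ A ∧ predF y ∉ A ∧ f = essMap y A := by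
  obtain ⟨y, z, hyz, hzy, hmoved⟩ := he
  have hz : z = predF y := Fin.ext (by simp only [predF]; omega)
  subst hz
  set A : Finset (Fin n) := Finset.univ.filter fun x => f x = some x
  have hyA : y ∉ A := by
    simp only [A, Finset.mem_filter, Finset.mem_univ, true_and, hyz, Option.some_inj]
    exact predF_ne_self (by omega)
  have hpA : predF y ∉ A := by
    simp only [A, Finset.mem_filter, Finset.mem_univ, true_and]
    intro hfix
    exact predF_ne_self (by omega) (f.inj hfix hyz)
  refine ⟨y, A, by omega, hyA, hpA, PEquiv.ext fun x => Option.ext fun w => ?_⟩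
  rw [essMap_eq_some_iff hyA hpA]
  simp only [A, Finset.mem_filter, Finset.mem_univ, true_and]
  constructor
  · intro hxw
    by_cases hwx : w = x
    · subst hwx; exact Or.inr ⟨hxw, rfl⟩
    · obtain rfl := hmoved x w hxw hwx
      exact Or.inl ⟨rfl, Option.some_inj.1 (hxw.symm.trans hyz)⟩
  · rintro (⟨rfl, rfl⟩ | ⟨hx, rfl⟩)
    · exact hyz
    · exact hx

noncomputable def essData (n k : ℕ) : Finset (Σ _ : Fin n, Finset (Fin n)) :=
  (Finset.univ.filter fun y : Fin n => 0 < y.val).sigma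
    fun y => Finset.powersetCard k ({y, predF y}ᶜ)

lemma mem_essData {n k : ℕ} {y : Fin n} {A : Finset (Fin n)} :
    ⟨y, A⟩ ∈ essData n k ↔ 0 < y.val ∧ y ∉ A ∧ predF y ∉ A ∧ A.card = k := by
  simp only [essData, Finset.mem_sigma, Finset.mem_filter, Finset.mem_univ, true_and,
    Finset.mem_powersetCard, Finset.subset_compl_iff_disjoint_right,
    Finset.disjoint_insert_right, Finset.disjoint_singleton_right, and_assoc]

lemma card_filter_val_pos (n : ℕ) :
    (Finset.univ.filter fun y : Fin n => 0 < y.val).card = n - 1 := by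
  rcases n with _ | m
  · rfl
  · have : (Finset.univ.filter fun y : Fin (m + 1) => 0 < y.val) = Finset.univ.erase 0 := by
      ext y
      simp only [Finset.mem_filter, Finset.mem_univ, true_and, Finset.mem_erase, and_true,
        Fin.val_pos_iff, Fin.pos_iff_ne_zero']
    rw [this, Finset.card_erase_of_mem (Finset.mem_univ _), Finset.card_univ, Fintype.card_fin]

lemma card_essData (n k : ℕ) : (essData n k).card = (n - 1) * Nat.choose (n - 2) k := by
  rw [essData, Finset.card_sigma, Finset.sum_const_nat fun y hy => ?_, card_filter_val_pos]
  rw [Finset.card_powersetCard, Finset.card_compl, Fintype.card_fin,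
    Finset.card_pair (predF_ne_self (Finset.mem_filter.1 hy).2).symm]

lemma essential_height_eq_image {n p : ℕ} (hp : 1 ≤ p) :
    {α : PT n | α ∈ IC n ∧ IsEssential α ∧ height α = p} =
      (fun q => essMap q.1 q.2) '' (essData n (p - 1) : Set (Σ _ : Fin n, Finset (Fin n))) := by
  ext f
  simp only [Set.mem_ofPred_eq, Set.mem_image, Finset.mem_coe]
  constructor
  · rintro ⟨-, he, hp⟩
    obtain ⟨y, A, hy, hyA, hpA, rfl⟩ := he.exists_eq_essMap
    rw [height_essMap hyA hpA] at hp
    exact ⟨⟨y, A⟩, mem_essData.2 ⟨hy, hyA, hpA, by omega⟩, rfl⟩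
  · rintro ⟨⟨y, A⟩, hq, rfl⟩
    obtain ⟨hy, hyA, hpA, hcard⟩ := mem_essData.1 hq
    exact ⟨essMap_mem_IC hyA hpA, isEssential_essMap hy hyA hpA, by
      rw [height_essMap hyA hpA, hcard]; omega⟩

lemma injOn_essMap_essData (n k : ℕ) :
    Set.InjOn (fun q => essMap q.1 q.2) (essData n k : Set (Σ _ : Fin n, Finset (Fin n))) := by
  rintro ⟨y, A⟩ hq ⟨y', A'⟩ hq' h
  obtain ⟨hy, hyA, hpA, -⟩ := mem_essData.1 hq
  obtain ⟨hy', hyA', hpA', -⟩ := mem_essData.1 hq'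
  obtain ⟨rfl, rfl⟩ := eq_and_eq_of_essMap_eq hy hyA hpA hy' hyA' hpA' h
  rfl

theorem stmt12_general (n p : ℕ) (hp1 : 1 ≤ p) :
    {α : PT n | α ∈ IC n ∧ IsEssential α ∧ height α = p}.ncard =
      (n - 1) * Nat.choose (n - 2) (p - 1) := by
  rw [essential_height_eq_image hp1, (injOn_essMap_essData n (p - 1)).ncard_image,
    Set.ncard_coe_finset, card_essData]

/-- for `1 ≤ p ≤ n-1`, the number of essential elements of `IC_n` of
height `p` is `(n-1)·C(n-2, p-1)`. -/
theorem stmt12 (n p : ℕ) (hp1 : 1 ≤ p) (hpn : p ≤ n - 1) (hn : 0 < n) :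
    {α : PT n | α ∈ IC n ∧ IsEssential α ∧ height α = p}.ncard =
      (n - 1) * Nat.choose (n - 2) (p - 1) :=
  stmt12_general n p hp1

end ICCatalan
end

section
/- Fix 1 ≤ p ≤ n and let G(p) ⊆ IC_n be the union of the set of idempotents of height p and the set of essential elements of height p. For all α, β ∈ IC_n with h(α) = h(β) = p: the product αβ belongs to G(p) if and only if α, β ∈ G(p) and (αβ = α or αβ = β). -/
open scoped Classical

namespace ICCatalan

/-- `G(p)`: the idempotents of height `p` together with the essential elements of
height `p` in `IC_n`. -/
def Gset (n p : ℕ) : Set (PT n) :=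
  {α | α ∈ IC n ∧ height α = p ∧ (α * α = α ∨ IsEssential α)}

/-
Write `γ = αβ`. Since `h(γ) = |dom β ∩ im α|`, the condition `h(α) = h(β) = h(γ)` forces
`im α = dom β`, so `dom γ = dom α`. Both maps are decreasing, so `xγ = x` forces `xα = x = xβ`.
Hence if `γ` is idempotent, so is `α`, and then `γ = β`. If `γ` is essential, moving only `y`
to `y - 1`, then `α` and `β` fix every other point of their domains, and `yα ∈ {y, y - 1}`:
either `α` is idempotent and `γ = β`, or `α = γ` is essential and `β` is the identity on `im α`.
-/

variable {n : ℕ}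

lemma mul_apply_eq_some_iff {α β : PT n} {x v : Fin n} :
    (α * β) x = some v ↔ ∃ u, α x = some u ∧ β u = some v :=
  Option.bind_eq_some_iff

lemma mul_self_eq_self_iff {f : PT n} : f * f = f ↔ ∀ x w, f x = some w → w = x := by
  constructor
  · intro h x w hxw
    have hff : (f * f) x = some w := by rw [h]; exact hxw
    obtain ⟨u, hxu, huw⟩ := mul_apply_eq_some_iff.mp hff
    cases Option.some_inj.mp (hxw.symm.trans hxu)
    exact f.inj huw hxu
  · intro h
    refine PEquiv.ext fun x => ?_
    cases hx : f x with
    | none => exact Option.bind_eq_none_iff.mpr (by simp [hx])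
    | some w => exact mul_apply_eq_some_iff.mpr ⟨w, hx, h x w hx ▸ hx⟩

lemma mul_eq_left_of_forall_pim {α β : PT n} (h : ∀ u ∈ pim α, β u = some u) : α * β = α := by
  refine PEquiv.ext fun x => ?_
  cases hx : α x with
  | none => exact Option.bind_eq_none_iff.mpr (by simp [hx])
  | some u => exact mul_apply_eq_some_iff.mpr ⟨u, hx, h u ⟨x, hx⟩⟩

lemma mul_eq_right_of_mul_self_eq_self {α β : PT n} (hα : α * α = α) (hβ : pdom β ⊆ pim α) :
    α * β = β := by
  have hfix := mul_self_eq_self_iff.mp hα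
  refine PEquiv.ext fun x => ?_
  cases hx : α x with
  | some w => rw [hfix x w hx] at hx; exact congrArg (Option.bind · β) hx
  | none =>
    refine (Option.bind_eq_none_iff.mpr (by simp [hx])).trans
      (Option.eq_none_iff_forall_ne_some.mpr ?_).symm
    rintro v hv
    obtain ⟨x', hx'⟩ := hβ ⟨v, hv⟩
    obtain rfl := hfix x' x hx'
    simp [hx] at hx'

lemma mul_self_eq_self_of_mul_eq_left {α β : PT n} (h : α * β = α) (hβ : pdom β ⊆ pim α) :
    β * β = β := by
  refine mul_self_eq_self_iff.mpr fun u w huw => ?_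
  obtain ⟨x, hxu⟩ := hβ ⟨w, huw⟩
  have hαβ : (α * β) x = some u := by rw [h]; exact hxu
  obtain ⟨u', hxu', hu'⟩ := mul_apply_eq_some_iff.mp hαβ
  cases hxu.symm.trans hxu'
  exact Option.some_inj.mp (huw.symm.trans hu')

lemma ncard_setOf_apply_mem (f : PT n) (S : Set (Fin n)) :
    {x | ∃ u ∈ S, f x = some u}.ncard = (S ∩ pim f).ncard := by
  refine Set.ncard_congr (fun x _ => (f x).getD x) ?_ ?_ ?_
  · rintro x ⟨u, hu, hxu⟩
    simpa [hxu] using ⟨hu, x, hxu⟩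
  · rintro x y ⟨u, -, hxu⟩ ⟨v, -, hyv⟩ h
    simp only [hxu, hyv, Option.getD_some] at h
    exact f.inj hxu (h ▸ hyv)
  · rintro u ⟨hu, x, hxu⟩
    exact ⟨x, ⟨u, hu, hxu⟩, by simp [hxu]⟩

lemma height_eq_ncard_pdom (f : PT n) : height f = (pdom f).ncard := by
  simpa [height, pdom] using (ncard_setOf_apply_mem f Set.univ).symm

lemma height_mul (α β : PT n) : height (α * β) = (pdom β ∩ pim α).ncard := by
  rw [height_eq_ncard_pdom, ← ncard_setOf_apply_mem]
  congr 1
  ext x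
  simp only [pdom, mul_apply_eq_some_iff, Set.mem_ofPred_eq]
  aesop

lemma pim_eq_pdom_of_height_mul {α β : PT n} (hα : height (α * β) = height α)
    (hβ : height (α * β) = height β) : pim α = pdom β := by
  rw [height_mul] at hα hβ
  rw [height_eq_ncard_pdom] at hβ
  calc pim α = pdom β ∩ pim α :=
        (Set.eq_of_subset_of_ncard_le Set.inter_subset_right hα.ge).symm
    _ = pdom β := Set.eq_of_subset_of_ncard_le Set.inter_subset_left hβ.ge

lemma IsDecr.eq_of_mul_apply_eq_self {α β : PT n} (hα : IsDecr α) (hβ : IsDecr β)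
    {x u : Fin n} (hxu : α x = some u) (hux : β u = some x) : u = x :=
  le_antisymm (hα x u hxu) (hβ u x hux)

lemma exists_mul_apply_of_pim_eq_pdom {α β : PT n} (hpim : pim α = pdom β) {x u : Fin n}
    (hxu : α x = some u) : ∃ v, β u = some v ∧ (α * β) x = some v := by
  obtain ⟨v, huv⟩ : u ∈ pdom β := hpim ▸ ⟨x, hxu⟩
  exact ⟨v, huv, mul_apply_eq_some_iff.mpr ⟨u, hxu, huv⟩⟩

lemma mul_self_eq_self_of_mul_mul_self {α β : PT n} (hα : IsDecr α) (hβ : IsDecr β)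
    (hpim : pim α = pdom β) (h : α * β * (α * β) = α * β) : α * α = α := by
  refine mul_self_eq_self_iff.mpr fun x u hxu => ?_
  obtain ⟨v, huv, hxv⟩ := exists_mul_apply_of_pim_eq_pdom hpim hxu
  obtain rfl := mul_self_eq_self_iff.mp h x v hxv
  exact hα.eq_of_mul_apply_eq_self hβ hxu huv

lemma mul_self_eq_self_or_of_isEssential_mul {α β : PT n} (hα : IsDecr α) (hβ : IsDecr β)
    (hpim : pim α = pdom β) (h : IsEssential (α * β)) :
    α * α = α ∨ (IsEssential α ∧ β * β = β ∧ α * β = α) := by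
  obtain ⟨y, z, hyz, hzy, hmoved⟩ := h
  have hfix : ∀ x u, x ≠ y → α x = some u → u = x ∧ β x = some x := by
    intro x u hxy hxu
    obtain ⟨v, huv, hxv⟩ := exists_mul_apply_of_pim_eq_pdom hpim hxu
    obtain rfl : v = x := by_contra fun hvx => hxy (hmoved x v hxv hvx)
    obtain rfl := hα.eq_of_mul_apply_eq_self hβ hxu huv
    exact ⟨rfl, huv⟩
  obtain ⟨u, hyu, huz⟩ := mul_apply_eq_some_iff.mp hyz
  -- `z ≤ u ≤ y = z + 1`: either `α` fixes `y` and `β` moves it, or `α` moves `y` and `β` fixes `z`.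
  have hu : u = y ∨ u = z := by
    have hzu : (z : ℕ) ≤ u := hβ u z huz
    have huy : (u : ℕ) ≤ y := hα y u hyu
    simp only [Fin.ext_iff]
    omega
  rcases hu with rfl | rfl
  · refine .inl (mul_self_eq_self_iff.mpr fun x w hxw => ?_)
    by_cases hxy : x = u
    · subst hxy
      exact Option.some_inj.mp (hxw.symm.trans hyu)
    · exact (hfix x w hxy hxw).1
  · have hαβ : α * β = α := by
      refine mul_eq_left_of_forall_pim fun w ⟨x, hxw⟩ => ?_
      by_cases hxy : x = y
      · subst hxy
        rwa [← Option.some_inj.mp (hyu.symm.trans hxw)]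
      · obtain ⟨rfl, hxx⟩ := hfix x w hxy hxw
        exact hxx
    have hαess : IsEssential α :=
      ⟨y, u, hyu, hzy, fun x w hxw hwx => by_contra fun hxy => hwx (hfix x w hxy hxw).1⟩
    exact .inr ⟨hαess, mul_self_eq_self_of_mul_eq_left hαβ hpim.ge, hαβ⟩

theorem stmt14_general (n p : ℕ) :
    ∀ α ∈ IC n, ∀ β ∈ IC n, height α = p → height β = p →
      (α * β ∈ Gset n p ↔
        (α ∈ Gset n p ∧ β ∈ Gset n p ∧ (α * β = α ∨ α * β = β))) := by
  intro α hα β hβ ha hb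
  refine ⟨fun hγ => ?_, fun ⟨_, _, h⟩ => by rcases h with h | h <;> rwa [h]⟩
  have hpim : pim α = pdom β :=
    pim_eq_pdom_of_height_mul (hγ.2.1.trans ha.symm) (hγ.2.1.trans hb.symm)
  have hcases : α * α = α ∨ (IsEssential α ∧ β * β = β ∧ α * β = α) :=
    hγ.2.2.elim (fun h => .inl (mul_self_eq_self_of_mul_mul_self hα.2 hβ.2 hpim h))
      (mul_self_eq_self_or_of_isEssential_mul hα.2 hβ.2 hpim)
  rcases hcases with hαα | ⟨hαess, hββ, hαβ⟩
  · have hαβ := mul_eq_right_of_mul_self_eq_self hαα hpim.ge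
    exact ⟨⟨hα, ha, .inl hαα⟩, hαβ ▸ hγ, .inr hαβ⟩
  · exact ⟨⟨hα, ha, .inr hαess⟩, ⟨hβ, hb, .inl hββ⟩, .inl hαβ⟩

/-- for `α, β ∈ IC_n` of height `p` (with `1 ≤ p ≤ n`):
`αβ ∈ G(p)` iff `α, β ∈ G(p)` and (`αβ = α` or `αβ = β`). -/
theorem stmt14 (n p : ℕ) (hp1 : 1 ≤ p) (hpn : p ≤ n) :
    ∀ α ∈ IC n, ∀ β ∈ IC n, height α = p → height β = p →
      (α * β ∈ Gset n p ↔
        (α ∈ Gset n p ∧ β ∈ Gset n p ∧ (α * β = α ∨ α * β = β))) :=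
  stmt14_general n p

end ICCatalan
end
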